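/- arXiv:2001.01542 — 5 statements merged into one kernel-verified Lean document; each statement's English description precedes it below -/
import Mathlib

section
/- Let L be an 𝓞-lattice in V, so that L/𝓜L is an n-dimensional K₁-vector space. For an 𝕆-lattice L̃ with [𝓞·L̃] = [L], choose a ∈ K^× with a·(𝓞·L̃) = L; then 𝓜L ⊆ a·L̃, the image (a·L̃)/𝓜L is an 𝓞₁-lattice of L/𝓜L, and its homothety class in I^L(SL(L/𝓜L), ω₀) depends only on the class [L̃]. The resulting map Res_L: π^{-1}([L]) → I^L(SL(L/𝓜L), ω₀), [L̃] ↦ [(a·L̃)/𝓜L], is a bijection, and it is SL(L/𝓜L)-equivariant: Res_L([g(L̃)]) = ḡ·Res_L([L̃]) for every g ∈ SL(L) := {g ∈ SL(V) : g(L) = L}, where ḡ ∈ SL(L/𝓜L) denotes the reduction of g. -/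
section LatticeSetup

variable {K Λ V : Type*} [Field K] [AddCommGroup Λ] [LinearOrder Λ] [IsOrderedAddMonoid Λ]
  [AddCommGroup V] [Module K V]

/-- `𝕆 = {x ∈ K : ω(x) ≥ 0}`, the ring of integers of `ω`. -/
def OO (ω : AddValuation K (WithTop Λ)) : Set K := {x : K | 0 ≤ ω x}

/-- `𝓞 = {x ∈ K : ω₁(x) ≥ 0}`, where `ω₁` is the composite of `ω` with the projection
`Λ → Λ/Λ₀`: concretely, `ω₁(x) ≥ 0` iff `ω(x) ≥ c` for some `c ∈ Λ₀`. -/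
def Obig (ω : AddValuation K (WithTop Λ)) (Λ₀ : AddSubgroup Λ) : Set K :=
  {x : K | ∃ c ∈ Λ₀, (c : WithTop Λ) ≤ ω x}

/-- `𝓜 = {x ∈ K : ω₁(x) > 0}`: concretely, `ω(x) > c` for every `c ∈ Λ₀`. -/
def Mbig (ω : AddValuation K (WithTop Λ)) (Λ₀ : AddSubgroup Λ) : Set K :=
  {x : K | ∀ c ∈ Λ₀, (c : WithTop Λ) < ω x}

/-- `L` is an `S`-lattice in `V`: `L = S·b₁ ⊕ ⋯ ⊕ S·bₙ` for some `K`-basis `b` of `V`. -/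
def IsLat (n : ℕ) (S : Set K) (L : Set V) : Prop :=
  ∃ b : Module.Basis (Fin n) K V,
    L = {v : V | ∃ c : Fin n → K, (∀ i, c i ∈ S) ∧ v = ∑ i, c i • b i}

/-- the `S`-submodule of `V` generated by `L` (set of finite `S`-linear combinations). -/
def SpanBy (S : Set K) (L : Set V) : Set V :=
  {v : V | ∃ (m : ℕ) (c : Fin m → K) (x : Fin m → V),
    (∀ i, c i ∈ S) ∧ (∀ i, x i ∈ L) ∧ v = ∑ i, c i • x i}

/-- homothety relation: `L' = a • L` for some `a ∈ K^×`. -/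
def Homo (L L' : Set V) : Prop := ∃ a : K, a ≠ 0 ∧ L' = (fun v => a • v) '' L

end LatticeSetup

/-!
Everything is computed in coordinates. If `L̃ = ⊕ 𝕆 bᵢ` and `a·(𝓞·L̃) = L`, then for `b' = a·b`
one has `a·L̃ = ⊕ 𝕆 b'ᵢ` and `L = ⊕ 𝓞 b'ᵢ`, so `𝓜L = ⊕ 𝓜 b'ᵢ ⊆ a·L̃` and the image of `a·L̃` in
`L/𝓜L` is the `𝓞₁`-lattice on the basis `q(b'ᵢ)`. Two such `𝕆`-lattices with the same image
coincide, since both contain `ker q = 𝓜L`. A scalar `u` with `u·L = L` is a unit of `𝓞`, so its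
residue is nonzero: this gives well-definedness, injectivity and equivariance. For surjectivity,
lift a basis of `W` to `y` in `L`: the coordinate matrix of `y` has invertible reduction, hence a
unit determinant in the local ring `𝓞`, so `y` is again an `𝓞`-basis of `L`.
-/

open Module Pointwise

section Valuation

variable {K Λ : Type*} [Field K] [AddCommGroup Λ] [LinearOrder Λ] [IsOrderedAddMonoid Λ]
  {ω : AddValuation K (WithTop Λ)} {Λ₀ : AddSubgroup Λ}

variable (ω) in
def ooSubring : Subring K where
  carrier := OO ω
  mul_mem' {x y} hx hy := by
    simpa only [OO, Set.mem_ofPred_eq, ω.map_mul] using add_nonneg hx hy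
  one_mem' := by simp [OO]
  add_mem' {x y} hx hy := le_trans (le_min hx hy) (ω.map_add x y)
  zero_mem' := by simp [OO]
  neg_mem' {x} hx := by simpa only [OO, Set.mem_ofPred_eq, ω.map_neg] using hx

variable (ω Λ₀) in
def obigSubring : Subring K where
  carrier := Obig ω Λ₀
  mul_mem' := by
    rintro x y ⟨c, hc, hcx⟩ ⟨d, hd, hdy⟩
    exact ⟨c + d, add_mem hc hd, by rw [ω.map_mul, WithTop.coe_add]; exact add_le_add hcx hdy⟩
  one_mem' := ⟨0, zero_mem _, by simp⟩
  add_mem' := by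
    rintro x y ⟨c, hc, hcx⟩ ⟨d, hd, hdy⟩
    refine ⟨min c d, by rcases min_choice c d with h | h <;> rw [h] <;> assumption, ?_⟩
    rw [WithTop.coe_min]
    exact le_trans (min_le_min hcx hdy) (ω.map_add x y)
  zero_mem' := ⟨0, zero_mem _, by simp⟩
  neg_mem' := by
    rintro x ⟨c, hc, hcx⟩
    exact ⟨c, hc, by rwa [ω.map_neg]⟩

lemma OO_subset_Obig : OO ω ⊆ Obig ω Λ₀ := fun _ hx => ⟨0, zero_mem _, hx⟩

lemma Mbig_subset_OO : Mbig ω Λ₀ ⊆ OO ω := fun _ hx => (hx 0 (zero_mem _)).le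

variable (ω Λ₀) in
def obigSubmodule : Submodule (ooSubring ω) K where
  carrier := Obig ω Λ₀
  add_mem' := (obigSubring ω Λ₀).add_mem
  zero_mem' := (obigSubring ω Λ₀).zero_mem
  smul_mem' t _ hx := (obigSubring ω Λ₀).mul_mem (OO_subset_Obig t.2) hx

variable (ω Λ₀) in
def mbigSubmodule : Submodule (obigSubring ω Λ₀) K where
  carrier := Mbig ω Λ₀
  add_mem' {x y} hx hy c hc := lt_of_lt_of_le (lt_min (hx c hc) (hy c hc)) (ω.map_add x y)
  zero_mem' c _ := by simp
  smul_mem' := by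
    rintro ⟨x, d, hd, hdx⟩ y hy c hc
    have hsum : ((c - d : Λ) : WithTop Λ) + d < ω y + ω x :=
      WithTop.add_lt_add_of_lt_of_le WithTop.coe_ne_top (hy _ (sub_mem hc hd)) hdx
    rwa [← WithTop.coe_add, sub_add_cancel, add_comm, ← ω.map_mul] at hsum

lemma inv_mem_Obig_of_notMem_Mbig {x : K} (hxM : x ∉ Mbig ω Λ₀) : x⁻¹ ∈ Obig ω Λ₀ := by
  obtain ⟨c, hc, hxc⟩ : ∃ c ∈ Λ₀, ω x ≤ c := by
    simpa only [Mbig, Set.mem_ofPred_eq, not_forall, not_lt, exists_prop] using hxM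
  obtain ⟨l, hl⟩ := WithTop.ne_top_iff_exists.1 (ne_top_of_le_ne_top WithTop.coe_ne_top hxc)
  refine ⟨-c, neg_mem hc, ?_⟩
  rw [← hl, WithTop.coe_le_coe] at hxc
  rw [ω.map_inv, ← hl]
  exact WithTop.coe_le_coe.2 (neg_le_neg hxc)

end Valuation

section Lattice

variable {K V ι : Type*} [Field K] [AddCommGroup V] [Module K V] [Fintype ι]

def latSet (S : Set K) (b : ι → V) : Set V :=
  {v : V | ∃ c : ι → K, (∀ i, c i ∈ S) ∧ v = ∑ i, c i • b i}

lemma isLat_iff {n : ℕ} {S : Set K} {L : Set V} :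
    IsLat n S L ↔ ∃ b : Basis (Fin n) K V, L = latSet S b := Iff.rfl

lemma mem_latSet_iff {S : Set K} (b : Basis ι K V) {v : V} :
    v ∈ latSet S b ↔ ∀ i, b.repr v i ∈ S := by
  constructor
  · rintro ⟨c, hc, rfl⟩ i
    rw [b.repr_sum_self]
    exact hc i
  · exact fun h => ⟨fun i => b.repr v i, h, (b.sum_repr v).symm⟩

lemma latSet_mono {S T : Set K} (h : S ⊆ T) (b : ι → V) : latSet S b ⊆ latSet T b :=
  fun _ ⟨c, hc, hv⟩ => ⟨c, fun i => h (hc i), hv⟩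

lemma smul_latSet (S : Set K) (a : K) (b : ι → V) : a • latSet S b = latSet S (a • b) := by
  ext v
  simp only [Set.mem_smul_set, latSet, Set.mem_ofPred_eq, Pi.smul_apply, smul_comm _ a,
    ← Finset.smul_sum]
  constructor
  · rintro ⟨_, ⟨c, hc, rfl⟩, rfl⟩
    exact ⟨c, hc, rfl⟩
  · rintro ⟨c, hc, rfl⟩
    exact ⟨_, ⟨c, hc, rfl⟩, rfl⟩

def latSubmodule (O : Subring K) (b : ι → V) : Submodule O V where
  carrier := latSet (O : Set K) b
  add_mem' := by
    rintro _ _ ⟨c, hc, rfl⟩ ⟨d, hd, rfl⟩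
    exact ⟨c + d, fun i => O.add_mem (hc i) (hd i), by
      simp only [Pi.add_apply, add_smul, Finset.sum_add_distrib]⟩
  zero_mem' := ⟨0, fun _ => O.zero_mem, by simp⟩
  smul_mem' := by
    rintro r _ ⟨c, hc, rfl⟩
    exact ⟨fun i => r * c i, fun i => O.mul_mem r.2 (hc i), by
      simp only [Finset.smul_sum, Subring.smul_def, smul_smul]⟩

lemma basis_mem_latSet (O : Subring K) (b : Basis ι K V) (i : ι) :
    b i ∈ latSet (O : Set K) b := by
  classical
  refine (mem_latSet_iff b).2 fun j => ?_
  rw [b.repr_self, Finsupp.single_apply]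
  split_ifs
  exacts [O.one_mem, O.zero_mem]

lemma latSet_subset_latSet {ι' : Type*} [Fintype ι'] (O : Subring K) {b : ι → V} {y : ι' → V}
    (hy : ∀ j, y j ∈ latSet (O : Set K) b) : latSet (O : Set K) y ⊆ latSet (O : Set K) b := by
  rintro _ ⟨c, hc, rfl⟩
  exact (latSubmodule O b).sum_mem fun j _ => (latSubmodule O b).smul_mem ⟨c j, hc j⟩ (hy j)

lemma spanBy_latSet (T : Subring K) (S : Submodule T K) (b : Basis ι K V) :
    SpanBy (S : Set K) (latSet (T : Set K) b) = latSet (S : Set K) b := by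
  apply subset_antisymm
  · rintro _ ⟨m, c, x, hc, hx, rfl⟩
    refine (mem_latSet_iff b).2 fun i => ?_
    simp only [map_sum, map_smul, Finset.sum_apply', Finsupp.smul_apply, smul_eq_mul]
    exact S.sum_mem fun j _ => by
      simpa only [Subring.smul_def, smul_eq_mul, mul_comm] using
        S.smul_mem ⟨_, (mem_latSet_iff b).1 (hx j) i⟩ (hc j)
  · intro v hv
    let e := Fintype.equivFin ι
    refine ⟨_, fun k => b.repr v (e.symm k), fun k => b (e.symm k),
      fun k => (mem_latSet_iff b).1 hv _, fun k => basis_mem_latSet T b _, ?_⟩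
    rw [e.symm.sum_comp (fun i => b.repr v i • b i), b.sum_repr]

lemma spanBy_image {V' F : Type*} [AddCommGroup V'] [Module K V'] [FunLike F V V']
    [LinearMapClass F K V V'] (S : Set K) (f : F) (X : Set V) :
    SpanBy S (f '' X) = f '' SpanBy S X := by
  ext v
  constructor
  · rintro ⟨m, c, x, hc, hx, rfl⟩
    choose y hy hxy using hx
    exact ⟨∑ i, c i • y i, ⟨m, c, y, hc, hy, rfl⟩, by simp only [map_sum, map_smul, hxy]⟩
  · rintro ⟨_, ⟨m, c, x, hc, hx, rfl⟩, rfl⟩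
    exact ⟨m, c, fun i => f (x i), hc, fun i => ⟨x i, hx i, rfl⟩,
      by simp only [map_sum, map_smul]⟩

lemma spanBy_smul (S : Set K) (a : K) (X : Set V) : SpanBy S (a • X) = a • SpanBy S X :=
  spanBy_image S (DistribSMul.toLinearMap K V a) X

lemma smul_latSet_eq_self_iff [Nonempty ι] (O : Subring K) (b : Basis ι K V) {u : K}
    (hu0 : u ≠ 0) : u • latSet (O : Set K) b = latSet (O : Set K) b ↔ u ∈ O ∧ u⁻¹ ∈ O := by
  have hmem : ∀ v, v ∈ u • latSet (O : Set K) b ↔ ∀ i, u⁻¹ * b.repr v i ∈ O := fun v => by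
    simp only [Set.mem_smul_set_iff_inv_smul_mem₀ hu0, mem_latSet_iff b, map_smul,
      Finsupp.smul_apply, smul_eq_mul, SetLike.mem_coe]
  obtain ⟨i⟩ := ‹Nonempty ι›
  constructor
  · intro h
    have hu := (mem_latSet_iff b).1 (h ▸ Set.smul_mem_smul_set (basis_mem_latSet O b i)) i
    have hu' := (hmem (b i)).1 (by rw [h]; exact basis_mem_latSet O b i) i
    simp only [map_smul, b.repr_self, Finsupp.smul_apply, Finsupp.single_eq_same, smul_eq_mul,
      mul_one] at hu hu'
    exact ⟨hu, hu'⟩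
  · rintro ⟨hu, hu'⟩
    ext v
    rw [hmem, mem_latSet_iff b]
    refine ⟨fun h i => ?_, fun h i => O.mul_mem hu' (h i)⟩
    simpa only [mul_inv_cancel_left₀ hu0, SetLike.mem_coe] using O.mul_mem hu (h i)

lemma exists_basis_latSet_eq [DecidableEq ι] (O : Subring K) (b : Basis ι K V)
    {A B : Matrix ι ι K} (hA : ∀ j i, A j i ∈ O) (hB : ∀ k j, B k j ∈ O) (hBA : B * A = 1) :
    ∃ b' : Basis ι K V, (∀ j, b' j = ∑ i, A j i • b i) ∧
      latSet (O : Set K) b' = latSet (O : Set K) b := by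
  set y : ι → V := fun j => ∑ i, A j i • b i
  have hb : ∀ k, b k = ∑ j, B k j • y j := fun k => by
    simp only [y, Finset.smul_sum, smul_smul]
    rw [Finset.sum_comm]
    simp only [← Finset.sum_smul, ← Matrix.mul_apply, hBA, Matrix.one_apply, ite_smul,
      one_smul, zero_smul, Finset.sum_ite_eq, Finset.mem_univ, if_true]
  have hy : ∀ j, y j ∈ latSet (O : Set K) b := fun j => ⟨_, hA j, rfl⟩
  have hb' : ∀ k, b k ∈ latSet (O : Set K) y := fun k => ⟨_, hB k, hb k⟩
  have hspan : ⊤ ≤ Submodule.span K (Set.range y) := by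
    rw [← b.span_eq, Submodule.span_le]
    rintro _ ⟨k, rfl⟩
    rw [hb k]
    exact Submodule.sum_mem _ fun j _ => Submodule.smul_mem _ _ (Submodule.subset_span ⟨j, rfl⟩)
  have hcard : Fintype.card ι = finrank K V := (finrank_eq_card_basis b).symm
  refine ⟨basisOfTopLeSpanOfCardEqFinrank y hspan hcard, fun j => ?_, ?_⟩
  · rw [coe_basisOfTopLeSpanOfCardEqFinrank]
  · rw [coe_basisOfTopLeSpanOfCardEqFinrank]
    exact subset_antisymm (latSet_subset_latSet O hy) (latSet_subset_latSet O hb')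

end Lattice

section Reduction

variable {K Λ V K1 W ι : Type*} [Field K] [AddCommGroup Λ] [LinearOrder Λ] [IsOrderedAddMonoid Λ]
  [AddCommGroup V] [Module K V] [Field K1] [AddCommGroup W] [Module K1 W] [Fintype ι]

lemma spanBy_Obig_latSet_OO (ω : AddValuation K (WithTop Λ)) (Λ₀ : AddSubgroup Λ)
    (b : Basis ι K V) : SpanBy (Obig ω Λ₀) (latSet (OO ω) b) = latSet (Obig ω Λ₀) b :=
  spanBy_latSet (ooSubring ω) (obigSubmodule ω Λ₀) b

lemma spanBy_Mbig_latSet_Obig (ω : AddValuation K (WithTop Λ)) (Λ₀ : AddSubgroup Λ)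
    (b : Basis ι K V) : SpanBy (Mbig ω Λ₀) (latSet (Obig ω Λ₀) b) = latSet (Mbig ω Λ₀) b :=
  spanBy_latSet (obigSubring ω Λ₀) (mbigSubmodule ω Λ₀) b

variable (ω : AddValuation K (WithTop Λ)) (Λ₀ : AddSubgroup Λ)

structure IsResidueMap (res : K → K1) : Prop where
  map_add : ∀ x ∈ Obig ω Λ₀, ∀ y ∈ Obig ω Λ₀, res (x + y) = res x + res y
  map_mul : ∀ x ∈ Obig ω Λ₀, ∀ y ∈ Obig ω Λ₀, res (x * y) = res x * res y
  map_one : res 1 = 1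
  surjective : ∀ t : K1, ∃ x ∈ Obig ω Λ₀, res x = t
  ker : ∀ x ∈ Obig ω Λ₀, (res x = 0 ↔ x ∈ Mbig ω Λ₀)

structure IsReduction (res : K → K1) (L : Set V) (q : V → W) : Prop where
  map_add : ∀ x ∈ L, ∀ y ∈ L, q (x + y) = q x + q y
  map_smul : ∀ r ∈ Obig ω Λ₀, ∀ x ∈ L, q (r • x) = res r • q x
  surjective : ∀ w : W, ∃ x ∈ L, q x = w
  ker : ∀ x ∈ L, (q x = 0 ↔ x ∈ SpanBy (Mbig ω Λ₀) L)

variable {ω Λ₀} {res : K → K1}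

namespace IsResidueMap

def toRingHom (hres : IsResidueMap ω Λ₀ res) : obigSubring ω Λ₀ →+* K1 where
  toFun x := res x
  map_one' := hres.map_one
  map_mul' x y := hres.map_mul x x.2 y y.2
  map_zero' := (hres.ker 0 (obigSubring ω Λ₀).zero_mem).2 (mbigSubmodule ω Λ₀).zero_mem
  map_add' x y := hres.map_add x x.2 y y.2

lemma map_ne_zero_of_inv_mem (hres : IsResidueMap ω Λ₀ res) {u : K} (hu0 : u ≠ 0)
    (hu : u ∈ Obig ω Λ₀) (hu' : u⁻¹ ∈ Obig ω Λ₀) : res u ≠ 0 := by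
  intro h
  have h1 := hres.map_mul u hu u⁻¹ hu'
  rw [mul_inv_cancel₀ hu0, hres.map_one, h, zero_mul] at h1
  exact one_ne_zero h1

lemma ne_zero_of_map_ne_zero (hres : IsResidueMap ω Λ₀ res) {u : K} (hu : u ∈ Obig ω Λ₀)
    (h : res u ≠ 0) : u ≠ 0 := by
  rintro rfl
  exact h ((hres.ker 0 hu).2 (mbigSubmodule ω Λ₀).zero_mem)

lemma inv_mem_of_map_ne_zero (hres : IsResidueMap ω Λ₀ res) {u : K} (hu : u ∈ Obig ω Λ₀)
    (h : res u ≠ 0) : u⁻¹ ∈ Obig ω Λ₀ :=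
  inv_mem_Obig_of_notMem_Mbig fun hM => h ((hres.ker u hu).2 hM)

lemma isUnit_of_toRingHom_ne_zero (hres : IsResidueMap ω Λ₀ res) {x : obigSubring ω Λ₀}
    (hx : hres.toRingHom x ≠ 0) : IsUnit x :=
  IsUnit.of_mul_eq_one ⟨_, hres.inv_mem_of_map_ne_zero x.2 hx⟩
    (Subtype.ext (mul_inv_cancel₀ (hres.ne_zero_of_map_ne_zero x.2 hx)))

end IsResidueMap

namespace IsReduction

variable {L : Set V} {q : V → W}

lemma map_sum_smul (hq : IsReduction ω Λ₀ res L q) {b : Basis ι K V}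
    (hb : L = latSet (Obig ω Λ₀) b) {c : ι → K} (hc : ∀ i, c i ∈ Obig ω Λ₀) (s : Finset ι) :
    q (∑ i ∈ s, c i • b i) = ∑ i ∈ s, res (c i) • q (b i) := by
  classical
  have hmem : ∀ s : Finset ι, ∑ i ∈ s, c i • b i ∈ L := fun s => by
    rw [hb]
    exact (latSubmodule (obigSubring ω Λ₀) b).sum_mem fun i _ =>
      (latSubmodule (obigSubring ω Λ₀) b).smul_mem ⟨c i, hc i⟩ (basis_mem_latSet _ b i)
  induction s using Finset.induction_on with
  | empty =>
    have h0 : (0 : V) ∈ L := by simpa using hmem ∅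
    simpa using hq.map_add 0 h0 0 h0
  | insert a s ha ih =>
    have hbL : b a ∈ L := hb ▸ basis_mem_latSet (obigSubring ω Λ₀) b a
    rw [Finset.sum_insert ha, Finset.sum_insert ha, hq.map_add _ (by simpa using hmem {a}) _
      (hmem s), hq.map_smul _ (hc a) _ hbL, ih]

lemma map_eq_sum (hq : IsReduction ω Λ₀ res L q) {b : Basis ι K V}
    (hb : L = latSet (Obig ω Λ₀) b) {x : V} (hx : x ∈ L) :
    q x = ∑ i, res (b.repr x i) • q (b i) := by
  conv_lhs => rw [← b.sum_repr x]
  exact hq.map_sum_smul hb ((mem_latSet_iff b).1 (hb ▸ hx)) _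

lemma exists_basis (hres : IsResidueMap ω Λ₀ res) (hq : IsReduction ω Λ₀ res L q)
    {b : Basis ι K V} (hb : L = latSet (Obig ω Λ₀) b) :
    ∃ d : Basis ι K1 W, ⇑d = fun i => q (b i) := by
  have hli : LinearIndependent K1 fun i => q (b i) := by
    rw [Fintype.linearIndependent_iff]
    intro g hg i
    choose u hu hug using fun i => hres.surjective (g i)
    have hxL : ∑ j, u j • b j ∈ L := hb ▸ ⟨u, hu, rfl⟩
    have hx0 : q (∑ j, u j • b j) = 0 := by
      rw [hq.map_sum_smul hb hu, ← hg]
      simp only [hug]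
    have hxM := (hq.ker _ hxL).1 hx0
    rw [hb, spanBy_Mbig_latSet_Obig, mem_latSet_iff b, b.repr_sum_self] at hxM
    rw [← hug i]
    exact (hres.ker _ (hu i)).2 (hxM i)
  have hspan : ⊤ ≤ Submodule.span K1 (Set.range fun i => q (b i)) := by
    rintro w -
    obtain ⟨x, hx, rfl⟩ := hq.surjective w
    rw [hq.map_eq_sum hb hx]
    exact Submodule.sum_mem _ fun i _ => Submodule.smul_mem _ _ (Submodule.subset_span ⟨i, rfl⟩)
  exact ⟨Basis.mk hli hspan, Basis.coe_mk hli hspan⟩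

lemma image_latSet_OO (hq : IsReduction ω Λ₀ res L q) {b : Basis ι K V}
    (hb : L = latSet (Obig ω Λ₀) b) :
    q '' latSet (OO ω) b = latSet (res '' OO ω) fun i => q (b i) := by
  ext w
  constructor
  · rintro ⟨_, ⟨c, hc, rfl⟩, rfl⟩
    exact ⟨fun i => res (c i), fun i => ⟨c i, hc i, rfl⟩,
      hq.map_sum_smul hb (fun i => OO_subset_Obig (hc i)) _⟩
  · rintro ⟨t, ht, rfl⟩
    choose c hc hct using ht
    refine ⟨∑ i, c i • b i, ⟨c, hc, rfl⟩, ?_⟩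
    rw [hq.map_sum_smul hb (fun i => OO_subset_Obig (hc i))]
    simp only [hct]

lemma image_smul (hq : IsReduction ω Λ₀ res L q) {u : K} (hu : u ∈ Obig ω Λ₀) {M : Set V}
    (hM : M ⊆ L) : q '' (u • M) = res u • q '' M := by
  simp only [← Set.image_smul, Set.image_image]
  exact Set.image_congr fun x hx => hq.map_smul u hu x (hM hx)

/-- Works because `ker q = 𝓜L` lies in `⊕ 𝕆 bᵢ`. -/
lemma subset_latSet_OO_of_image_subset (hq : IsReduction ω Λ₀ res L q) {b : Basis ι K V}
    (hb : L = latSet (Obig ω Λ₀) b) {M : Set V} (hM : M ⊆ L)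
    (h : q '' M ⊆ q '' latSet (OO ω) b) : M ⊆ latSet (OO ω) b := by
  intro x hx
  obtain ⟨y, hy, hxy⟩ := h ⟨x, hx, rfl⟩
  have hyL : y ∈ L := hb ▸ latSet_mono OO_subset_Obig b hy
  have hdL : x - y ∈ L := by
    have hxL := hM hx
    rw [hb] at hxL hyL ⊢
    exact (latSubmodule (obigSubring ω Λ₀) b).sub_mem hxL hyL
  have hd : q (x - y) = 0 := by
    have h1 := hq.map_add _ hdL _ hyL
    rwa [sub_add_cancel, ← hxy, right_eq_add] at h1
  have hdM := (hq.ker _ hdL).1 hd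
  rw [hb, spanBy_Mbig_latSet_Obig] at hdM
  have hsum := (latSubmodule (ooSubring ω) b).add_mem (latSet_mono Mbig_subset_OO b hdM) hy
  rwa [sub_add_cancel] at hsum

lemma exists_basis_lift [DecidableEq ι] (hres : IsResidueMap ω Λ₀ res)
    (hq : IsReduction ω Λ₀ res L q) {b : Basis ι K V} (hb : L = latSet (Obig ω Λ₀) b)
    (d : Basis ι K1 W) :
    ∃ b' : Basis ι K V, (∀ j, q (b' j) = d j) ∧ L = latSet (Obig ω Λ₀) b' := by
  obtain ⟨d₀, hd₀⟩ := hq.exists_basis hres hb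
  choose y hyL hqy using fun j => hq.surjective (d j)
  let A : Matrix ι ι (obigSubring ω Λ₀) :=
    Matrix.of fun j i => ⟨b.repr (y j) i, (mem_latSet_iff b).1 (hb ▸ hyL j) i⟩
  have hqb : ∀ i, q (b i) = d₀ i := fun i => (congrFun hd₀ i).symm
  have hAres : hres.toRingHom.mapMatrix A = (d₀.toMatrix d).transpose := by
    ext j i
    rw [Matrix.transpose_apply, Basis.toMatrix_apply, ← hqy, hq.map_eq_sum hb (hyL j)]
    simp_rw [hqb]
    rw [d₀.repr_sum_self]
    rfl
  have hA : IsUnit A.det := hres.isUnit_of_toRingHom_ne_zero (by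
    rw [RingHom.map_det, hAres, Matrix.det_transpose, ← Basis.det_apply]
    exact (d₀.isUnit_det d).ne_zero)
  let coeMatrix := (obigSubring ω Λ₀).subtype.mapMatrix (m := ι)
  obtain ⟨b', hb'y, hb'b⟩ := exists_basis_latSet_eq (obigSubring ω Λ₀) b
    (A := coeMatrix A) (B := coeMatrix A⁻¹) (fun j i => (A j i).2) (fun k j => (A⁻¹ k j).2)
    (by rw [← map_mul, Matrix.nonsing_inv_mul A hA, map_one])
  have hb'y : ∀ j, b' j = y j := fun j => (hb'y j).trans (b.sum_repr (y j))
  exact ⟨b', fun j => by rw [hb'y, hqy], hb.trans hb'b.symm⟩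

end IsReduction

end Reduction

lemma Homo.symm {K V : Type*} [Field K] [AddCommGroup V] [Module K V] {L L' : Set V}
    (h : Homo (K := K) L L') : Homo (K := K) L' L := by
  obtain ⟨a, ha, rfl⟩ := h
  exact ⟨a⁻¹, inv_ne_zero ha, (inv_smul_smul₀ ha L).symm⟩

section Fibre

variable {K Λ V K1 W : Type*} [Field K] [AddCommGroup Λ] [LinearOrder Λ] [IsOrderedAddMonoid Λ]
  [AddCommGroup V] [Module K V] [Field K1] [AddCommGroup W] [Module K1 W]
  {ω : AddValuation K (WithTop Λ)} {Λ₀ : AddSubgroup Λ} {n : ℕ} {L Lt Lt' : Set V} {a a' : K}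

lemma exists_basis_of_smul_spanBy_eq (hLt : IsLat n (OO ω) Lt) (ha : a ≠ 0)
    (hspan : a • SpanBy (Obig ω Λ₀) Lt = L) :
    ∃ b : Basis (Fin n) K V, a • Lt = latSet (OO ω) b ∧ L = latSet (Obig ω Λ₀) b := by
  obtain ⟨b, rfl⟩ := isLat_iff.1 hLt
  have hab : a • ⇑b = ⇑(b.isUnitSMul fun _ => ha.isUnit) := funext fun i => by
    rw [Basis.isUnitSMul_apply, Pi.smul_apply]
  refine ⟨b.isUnitSMul fun _ => ha.isUnit, ?_, ?_⟩
  · rw [smul_latSet, hab]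
  · rw [← hspan, spanBy_Obig_latSet_OO, smul_latSet, hab]

lemma smul_subset_of_smul_spanBy_eq (hLt : IsLat n (OO ω) Lt) (ha : a ≠ 0)
    (hspan : a • SpanBy (Obig ω Λ₀) Lt = L) : a • Lt ⊆ L := by
  obtain ⟨b, hbLt, hb⟩ := exists_basis_of_smul_spanBy_eq hLt ha hspan
  rw [hbLt, hb]
  exact latSet_mono OO_subset_Obig b

lemma spanBy_Mbig_subset_of_smul_spanBy_eq (hLt : IsLat n (OO ω) Lt) (ha : a ≠ 0)
    (hspan : a • SpanBy (Obig ω Λ₀) Lt = L) : SpanBy (Mbig ω Λ₀) L ⊆ a • Lt := by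
  obtain ⟨b, hbLt, hb⟩ := exists_basis_of_smul_spanBy_eq hLt ha hspan
  rw [hbLt, hb, spanBy_Mbig_latSet_Obig]
  exact latSet_mono Mbig_subset_OO b

namespace IsReduction

variable {res : K → K1} {q : V → W}

lemma isLat_image (hres : IsResidueMap ω Λ₀ res) (hq : IsReduction ω Λ₀ res L q)
    (hLt : IsLat n (OO ω) Lt) (ha : a ≠ 0) (hspan : a • SpanBy (Obig ω Λ₀) Lt = L) :
    IsLat n (res '' OO ω) (q '' (a • Lt)) := by
  obtain ⟨b, hbLt, hb⟩ := exists_basis_of_smul_spanBy_eq hLt ha hspan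
  obtain ⟨d, hd⟩ := hq.exists_basis hres hb
  refine isLat_iff.2 ⟨d, ?_⟩
  rw [hbLt, hq.image_latSet_OO hb, hd]

lemma homo_image_smul {ι : Type*} [Fintype ι] [Nonempty ι] (hres : IsResidueMap ω Λ₀ res)
    (hq : IsReduction ω Λ₀ res L q) {b : Basis ι K V} (hb : L = latSet (Obig ω Λ₀) b) {u : K}
    (hu0 : u ≠ 0) (huL : u • L = L) {M : Set V} (hM : M ⊆ L) :
    Homo (K := K1) (q '' M) (q '' (u • M)) := by
  rw [hb] at huL
  obtain ⟨hu, hu'⟩ := (smul_latSet_eq_self_iff (obigSubring ω Λ₀) b hu0).1 huL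
  exact ⟨res u, hres.map_ne_zero_of_inv_mem hu0 hu hu', hq.image_smul hu hM⟩

lemma homo_image_of_homo [NeZero n] (hres : IsResidueMap ω Λ₀ res)
    (hq : IsReduction ω Λ₀ res L q) (hLt : IsLat n (OO ω) Lt) (ha : a ≠ 0) (ha' : a' ≠ 0)
    (hspan : a • SpanBy (Obig ω Λ₀) Lt = L) (hspan' : a' • SpanBy (Obig ω Λ₀) Lt' = L)
    (h : Homo (K := K) Lt Lt') : Homo (K := K1) (q '' (a • Lt)) (q '' (a' • Lt')) := by
  obtain ⟨t, ht, rfl⟩ := h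
  obtain ⟨b, -, hb⟩ := exists_basis_of_smul_spanBy_eq hLt ha hspan
  have hua : a' * t * a⁻¹ * a = a' * t := by field_simp
  have huL : (a' * t * a⁻¹) • L = L :=
    calc (a' * t * a⁻¹) • L = (a' * t * a⁻¹) • a • SpanBy (Obig ω Λ₀) Lt := by rw [hspan]
      _ = a' • SpanBy (Obig ω Λ₀) (t • Lt) := by rw [smul_smul, hua, ← smul_smul, spanBy_smul]
      _ = L := hspan'
  have hscale : a' • t • Lt = (a' * t * a⁻¹) • a • Lt := by rw [smul_smul, smul_smul, hua]
  change Homo (q '' (a • Lt)) (q '' (a' • t • Lt))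
  rw [hscale]
  exact hq.homo_image_smul hres hb (by simp [ha, ha', ht]) huL
    (smul_subset_of_smul_spanBy_eq hLt ha hspan)

lemma homo_of_homo_image [NeZero n] (hres : IsResidueMap ω Λ₀ res)
    (hq : IsReduction ω Λ₀ res L q) (hLt : IsLat n (OO ω) Lt) (hLt' : IsLat n (OO ω) Lt')
    (ha : a ≠ 0) (ha' : a' ≠ 0) (hspan : a • SpanBy (Obig ω Λ₀) Lt = L)
    (hspan' : a' • SpanBy (Obig ω Λ₀) Lt' = L)
    (h : Homo (K := K1) (q '' (a • Lt)) (q '' (a' • Lt'))) : Homo (K := K) Lt Lt' := by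
  obtain ⟨t, ht, hqt⟩ := h
  obtain ⟨u, hu, rfl⟩ := hres.surjective t
  have hu0 := hres.ne_zero_of_map_ne_zero hu ht
  obtain ⟨b, -, hb⟩ := exists_basis_of_smul_spanBy_eq hLt ha hspan
  have huL : u • L = L := by
    rw [hb]
    exact (smul_latSet_eq_self_iff (obigSubring ω Λ₀) b hu0).2
      ⟨hu, hres.inv_mem_of_map_ne_zero hu ht⟩
  have hspanu : (u * a) • SpanBy (Obig ω Λ₀) Lt = L := by rw [← smul_smul, hspan, huL]
  obtain ⟨b₁, hLt₁, hb₁⟩ := exists_basis_of_smul_spanBy_eq hLt (mul_ne_zero hu0 ha) hspanu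
  obtain ⟨b₂, hLt₂, hb₂⟩ := exists_basis_of_smul_spanBy_eq hLt' ha' hspan'
  have hq_eq : q '' latSet (OO ω) b₁ = q '' latSet (OO ω) b₂ := by
    rw [← hLt₁, ← hLt₂, ← smul_smul, hq.image_smul hu (smul_subset_of_smul_spanBy_eq hLt ha hspan)]
    exact hqt.symm
  have heq : (u * a) • Lt = a' • Lt' := by
    rw [hLt₁, hLt₂]
    refine subset_antisymm (hq.subset_latSet_OO_of_image_subset hb₂ ?_ hq_eq.le)
      (hq.subset_latSet_OO_of_image_subset hb₁ ?_ hq_eq.ge)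
    · exact hb₁ ▸ latSet_mono OO_subset_Obig b₁
    · exact hb₂ ▸ latSet_mono OO_subset_Obig b₂
  refine ⟨a'⁻¹ * (u * a), by simp [ha, ha', hu0], ?_⟩
  change Lt' = (a'⁻¹ * (u * a)) • Lt
  rw [← smul_smul, heq, inv_smul_smul₀ ha']

lemma exists_fiber_homo (hres : IsResidueMap ω Λ₀ res)
    (hq : IsReduction ω Λ₀ res L q) (hL : IsLat n (Obig ω Λ₀) L) {P : Set W}
    (hP : IsLat n (res '' OO ω) P) :
    ∃ (Lt : Set V) (a : K), IsLat n (OO ω) Lt ∧ a ≠ 0 ∧ a • SpanBy (Obig ω Λ₀) Lt = L ∧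
      Homo (K := K1) (q '' (a • Lt)) P := by
  obtain ⟨b, hb⟩ := isLat_iff.1 hL
  obtain ⟨d, rfl⟩ := isLat_iff.1 hP
  obtain ⟨b', hqb', hb'⟩ := hq.exists_basis_lift hres hb d
  refine ⟨latSet (OO ω) b', 1, isLat_iff.2 ⟨b', rfl⟩, one_ne_zero, ?_, 1, one_ne_zero, ?_⟩
  · rw [one_smul, spanBy_Obig_latSet_OO, hb']
  · rw [Set.image_smul, one_smul, one_smul, hq.image_latSet_OO hb']
    simp only [hqb']

lemma homo_image_map [NeZero n] (hres : IsResidueMap ω Λ₀ res) (hq : IsReduction ω Λ₀ res L q)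
    {g : V ≃ₗ[K] V} (hgL : g '' L = L) {gbar : W ≃ₗ[K1] W} (hg : ∀ x ∈ L, q (g x) = gbar (q x))
    (hLt : IsLat n (OO ω) Lt) (ha : a ≠ 0) (ha' : a' ≠ 0)
    (hspan : a • SpanBy (Obig ω Λ₀) Lt = L)
    (hspan' : a' • SpanBy (Obig ω Λ₀) (g '' Lt) = L) :
    Homo (K := K1) (q '' (a' • g '' Lt)) (gbar '' (q '' (a • Lt))) := by
  obtain ⟨b, -, hb⟩ := exists_basis_of_smul_spanBy_eq hLt ha hspan
  have hsub := smul_subset_of_smul_spanBy_eq hLt ha hspan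
  have hspan'' : a' • SpanBy (Obig ω Λ₀) Lt = L := by
    apply Set.image_injective.2 g.injective
    rw [hgL, image_smul_set, ← spanBy_image]
    exact hspan'
  have hua : a' * a⁻¹ * a = a' := by field_simp
  have huL : (a' * a⁻¹) • L = L :=
    calc (a' * a⁻¹) • L = (a' * a⁻¹) • a • SpanBy (Obig ω Λ₀) Lt := by rw [hspan]
      _ = L := by rw [smul_smul, hua, hspan'']
  have hscale : a' • g '' Lt = (a' * a⁻¹) • g '' (a • Lt) := by
    rw [image_smul_set, smul_smul, hua]
  have hqg : q '' (g '' (a • Lt)) = gbar '' (q '' (a • Lt)) := by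
    simp only [Set.image_image]
    exact Set.image_congr fun x hx => hg x (hsub hx)
  rw [hscale, ← hqg]
  refine (hq.homo_image_smul hres hb (by simp [ha, ha']) huL ?_).symm
  rw [← hgL]
  exact Set.image_mono hsub

end IsReduction

end Fibre

theorem statement4_general {K Λ V : Type*} [Field K] [AddCommGroup Λ] [LinearOrder Λ] [IsOrderedAddMonoid Λ]
    [AddCommGroup V] [Module K V]
    (ω : AddValuation K (WithTop Λ))
    (Λ₀ : AddSubgroup Λ)
    (n : ℕ) (hn : 1 ≤ n)
    -- a realization of the residue field K₁ = 𝓞/𝓜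
    (K1 : Type*) [Field K1] (res : K → K1)
    (hres_add : ∀ x ∈ Obig ω Λ₀, ∀ y ∈ Obig ω Λ₀, res (x + y) = res x + res y)
    (hres_mul : ∀ x ∈ Obig ω Λ₀, ∀ y ∈ Obig ω Λ₀, res (x * y) = res x * res y)
    (hres_one : res 1 = 1)
    (hres_surj : ∀ t : K1, ∃ x ∈ Obig ω Λ₀, res x = t)
    (hres_ker : ∀ x ∈ Obig ω Λ₀, (res x = 0 ↔ x ∈ Mbig ω Λ₀))
    -- the 𝓞-lattice L
    (L : Set V) (hL : IsLat n (Obig ω Λ₀) L)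
    -- a realization of the quotient W = L/𝓜L
    (W : Type*) [AddCommGroup W] [Module K1 W] (q : V → W)
    (hq_add : ∀ x ∈ L, ∀ y ∈ L, q (x + y) = q x + q y)
    (hq_smul : ∀ r ∈ Obig ω Λ₀, ∀ x ∈ L, q (r • x) = res r • q x)
    (hq_surj : ∀ w : W, ∃ x ∈ L, q x = w)
    (hq_ker : ∀ x ∈ L, (q x = 0 ↔ x ∈ SpanBy (Mbig ω Λ₀) L)) :
    -- L/𝓜L is an n-dimensional K₁-vector space
    Nonempty (Module.Basis (Fin n) K1 W) ∧
    -- 𝓜L ⊆ a·L̃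
    (∀ (Lt : Set V) (a : K), IsLat n (OO ω) Lt → a ≠ 0 →
      (fun v => a • v) '' SpanBy (Obig ω Λ₀) Lt = L →
      SpanBy (Mbig ω Λ₀) L ⊆ (fun v => a • v) '' Lt) ∧
    -- q(a·L̃) is an 𝓞₁-lattice of W
    (∀ (Lt : Set V) (a : K), IsLat n (OO ω) Lt → a ≠ 0 →
      (fun v => a • v) '' SpanBy (Obig ω Λ₀) Lt = L →
      IsLat n (res '' OO ω) (q '' ((fun v => a • v) '' Lt))) ∧
    -- Res_L is well defined on homothety classes and injective
    (∀ (Lt Lt' : Set V) (a a' : K), IsLat n (OO ω) Lt → IsLat n (OO ω) Lt' →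
      a ≠ 0 → a' ≠ 0 →
      (fun v => a • v) '' SpanBy (Obig ω Λ₀) Lt = L →
      (fun v => a' • v) '' SpanBy (Obig ω Λ₀) Lt' = L →
      (Homo (K := K) Lt Lt' ↔
        Homo (K := K1) (q '' ((fun v => a • v) '' Lt)) (q '' ((fun v => a' • v) '' Lt')))) ∧
    -- Res_L is surjective onto the 𝓞₁-lattices of W (up to homothety)
    (∀ P : Set W, IsLat n (res '' OO ω) P →
      ∃ (Lt : Set V) (a : K), IsLat n (OO ω) Lt ∧ a ≠ 0 ∧
        (fun v => a • v) '' SpanBy (Obig ω Λ₀) Lt = L ∧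
        Homo (K := K1) (q '' ((fun v => a • v) '' Lt)) P) ∧
    -- Res_L is SL(L/𝓜L)-equivariant: Res_L([g(L̃)]) = ḡ · Res_L([L̃])
    (∀ g : V ≃ₗ[K] V, LinearMap.det g.toLinearMap = 1 → (fun v => g v) '' L = L →
      ∀ gbar : W ≃ₗ[K1] W, (∀ x ∈ L, q (g x) = gbar (q x)) →
      ∀ (Lt : Set V) (a a' : K), IsLat n (OO ω) Lt → a ≠ 0 → a' ≠ 0 →
        (fun v => a • v) '' SpanBy (Obig ω Λ₀) Lt = L →
        (fun v => a' • v) '' SpanBy (Obig ω Λ₀) ((fun v => g v) '' Lt) = L →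
        Homo (K := K1) (q '' ((fun v => a' • v) '' ((fun v => g v) '' Lt)))
          ((fun z => gbar z) '' (q '' ((fun v => a • v) '' Lt)))) := by
  have : NeZero n := ⟨Nat.pos_iff_ne_zero.1 hn⟩
  have hres : IsResidueMap ω Λ₀ res := ⟨hres_add, hres_mul, hres_one, hres_surj, hres_ker⟩
  have hq : IsReduction ω Λ₀ res L q := ⟨hq_add, hq_smul, hq_surj, hq_ker⟩
  obtain ⟨b, hb⟩ := isLat_iff.1 hL
  obtain ⟨d, -⟩ := hq.exists_basis hres hb
  refine ⟨⟨d⟩, fun Lt a hLt ha hspan => spanBy_Mbig_subset_of_smul_spanBy_eq hLt ha hspan,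
    fun Lt a hLt ha hspan => hq.isLat_image hres hLt ha hspan,
    fun Lt Lt' a a' hLt hLt' ha ha' hspan hspan' =>
      ⟨hq.homo_image_of_homo hres hLt ha ha' hspan hspan',
        hq.homo_of_homo_image hres hLt hLt' ha ha' hspan hspan'⟩,
    fun P hP => hq.exists_fiber_homo hres hL hP,
    fun g _ hgL gbar hg Lt a a' hLt ha ha' hspan hspan' =>
      hq.homo_image_map hres hgL hg hLt ha ha' hspan hspan'⟩

/-- **Statement 4.** Realizing the residue field `K₁ = 𝓞/𝓜` by a field `K1` with a
surjective "reduction" `res : 𝓞 → K1` of kernel `𝓜`, and the quotient `L/𝓜L` of the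
`𝓞`-lattice `L` by a `K1`-vector space `W` with a reduction map `q` (additive and
`res`-semilinear on `L`, surjective, with kernel `𝓜·L`):  `W` is `n`-dimensional, and
for `L̃` in the fiber `π⁻¹([L])` and `a ∈ K^×` with `a·(𝓞·L̃) = L` one has `𝓜L ⊆ a·L̃`,
the image `q(a·L̃)` is an `𝓞₁`-lattice of `W` (where `𝓞₁ = res(𝕆)`), its homothety
class depends only on `[L̃]`, and `[L̃] ↦ [q(a·L̃)]` is an `SL(L/𝓜L)`-equivariant
bijection from `π⁻¹([L])` onto the set of homothety classes of `𝓞₁`-lattices of `W`. -/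
theorem statement4 {K Λ V : Type*} [Field K] [AddCommGroup Λ] [LinearOrder Λ] [IsOrderedAddMonoid Λ]
    [AddCommGroup V] [Module K V]
    (ω : AddValuation K (WithTop Λ))
    (hsurj : ∀ l : Λ, ∃ x : K, ω x = (l : WithTop Λ))
    (Λ₀ : AddSubgroup Λ)
    (hconv : ∀ a ∈ Λ₀, ∀ b : Λ, 0 ≤ b → b ≤ a → b ∈ Λ₀)
    (hbot : Λ₀ ≠ ⊥) (htop : Λ₀ ≠ ⊤)
    (n : ℕ) (hn : 1 ≤ n) (hdim : Module.finrank K V = n)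
    -- a realization of the residue field K₁ = 𝓞/𝓜
    (K1 : Type*) [Field K1] (res : K → K1)
    (hres_add : ∀ x ∈ Obig ω Λ₀, ∀ y ∈ Obig ω Λ₀, res (x + y) = res x + res y)
    (hres_mul : ∀ x ∈ Obig ω Λ₀, ∀ y ∈ Obig ω Λ₀, res (x * y) = res x * res y)
    (hres_one : res 1 = 1)
    (hres_surj : ∀ t : K1, ∃ x ∈ Obig ω Λ₀, res x = t)
    (hres_ker : ∀ x ∈ Obig ω Λ₀, (res x = 0 ↔ x ∈ Mbig ω Λ₀))
    -- the 𝓞-lattice L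
    (L : Set V) (hL : IsLat n (Obig ω Λ₀) L)
    -- a realization of the quotient W = L/𝓜L
    (W : Type*) [AddCommGroup W] [Module K1 W] (q : V → W)
    (hq_add : ∀ x ∈ L, ∀ y ∈ L, q (x + y) = q x + q y)
    (hq_smul : ∀ r ∈ Obig ω Λ₀, ∀ x ∈ L, q (r • x) = res r • q x)
    (hq_surj : ∀ w : W, ∃ x ∈ L, q x = w)
    (hq_ker : ∀ x ∈ L, (q x = 0 ↔ x ∈ SpanBy (Mbig ω Λ₀) L)) :
    -- L/𝓜L is an n-dimensional K₁-vector space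
    Nonempty (Module.Basis (Fin n) K1 W) ∧
    -- 𝓜L ⊆ a·L̃
    (∀ (Lt : Set V) (a : K), IsLat n (OO ω) Lt → a ≠ 0 →
      (fun v => a • v) '' SpanBy (Obig ω Λ₀) Lt = L →
      SpanBy (Mbig ω Λ₀) L ⊆ (fun v => a • v) '' Lt) ∧
    -- q(a·L̃) is an 𝓞₁-lattice of W
    (∀ (Lt : Set V) (a : K), IsLat n (OO ω) Lt → a ≠ 0 →
      (fun v => a • v) '' SpanBy (Obig ω Λ₀) Lt = L →
      IsLat n (res '' OO ω) (q '' ((fun v => a • v) '' Lt))) ∧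
    -- Res_L is well defined on homothety classes and injective
    (∀ (Lt Lt' : Set V) (a a' : K), IsLat n (OO ω) Lt → IsLat n (OO ω) Lt' →
      a ≠ 0 → a' ≠ 0 →
      (fun v => a • v) '' SpanBy (Obig ω Λ₀) Lt = L →
      (fun v => a' • v) '' SpanBy (Obig ω Λ₀) Lt' = L →
      (Homo (K := K) Lt Lt' ↔
        Homo (K := K1) (q '' ((fun v => a • v) '' Lt)) (q '' ((fun v => a' • v) '' Lt')))) ∧
    -- Res_L is surjective onto the 𝓞₁-lattices of W (up to homothety)
    (∀ P : Set W, IsLat n (res '' OO ω) P →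
      ∃ (Lt : Set V) (a : K), IsLat n (OO ω) Lt ∧ a ≠ 0 ∧
        (fun v => a • v) '' SpanBy (Obig ω Λ₀) Lt = L ∧
        Homo (K := K1) (q '' ((fun v => a • v) '' Lt)) P) ∧
    -- Res_L is SL(L/𝓜L)-equivariant: Res_L([g(L̃)]) = ḡ · Res_L([L̃])
    (∀ g : V ≃ₗ[K] V, LinearMap.det g.toLinearMap = 1 → (fun v => g v) '' L = L →
      ∀ gbar : W ≃ₗ[K1] W, (∀ x ∈ L, q (g x) = gbar (q x)) →
      ∀ (Lt : Set V) (a a' : K), IsLat n (OO ω) Lt → a ≠ 0 → a' ≠ 0 →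
        (fun v => a • v) '' SpanBy (Obig ω Λ₀) Lt = L →
        (fun v => a' • v) '' SpanBy (Obig ω Λ₀) ((fun v => g v) '' Lt) = L →
        Homo (K := K1) (q '' ((fun v => a' • v) '' ((fun v => g v) '' Lt)))
          ((fun z => gbar z) '' (q '' ((fun v => a • v) '' Lt)))) :=
  statement4_general ω Λ₀ n hn K1 res hres_add hres_mul hres_one hres_surj hres_ker L hL W q hq_add
    hq_smul hq_surj hq_ker
end

section
/- Assume R is divisible. Then for every x ∈ V_R and every pair of bases Δ, Δ' of Φ, there exists a unique w ∈ W(Φ) such that x ∈ C̄^v_{R,w(Δ)} and C^v_{R,w(Δ)} ∩ (x + C^v_{R,Δ'}) ≠ ∅. -/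
/-!
Let `z := ∑_{γ ∈ Φ⁺_{Δ'}} γ^∨` (that is, `2ρ^∨`), on which every root of `Φ⁺_{Δ'}` is positive,
and let `L β := (β(x), β(z))` in `R × ℤ`, ordered lexicographically; `L` vanishes on no root.  The
two conditions on `w` say exactly that `L` is positive on `w(Δ)`: then `x + ε z` lies in
`C^v_{R,w(Δ)}` for all small enough `ε > 0`, and divisibility of `R` provides such an `ε`.  It
remains to see that `W(Φ)` acts simply transitively on positive systems.  Some `w` makes `L ∘ w`
positive on `Δ`, by descent on the number of positive roots that `L ∘ w` makes negative; and an
element of `W(Φ)` preserving `Φ⁺_Δ` is trivial, by the deletion argument, once `W(Φ)` is known to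
be generated by the simple reflections.  For the latter, induct on `β(2ρ^∨)` for `β ∈ Φ⁺_Δ`: the
invariant form `(φ, ψ) ↦ ∑_{γ ∈ Φ} φ(γ^∨) ψ(γ^∨)` provides a simple root `a` with `β(a^∨) > 0`,
and then `r_a(β)` is lower.
-/

open scoped Classical TensorProduct

section RootSetup

variable {VZ : Type*} [AddCommGroup VZ]

/-- the additive map `α ⊗ id_R : V_R = V_ℤ ⊗ R → R` induced by a root `α`. -/
noncomputable def rootR (R : Type*) [AddCommGroup R] [LinearOrder R] [IsOrderedAddMonoid R] (α : VZ →ₗ[ℤ] ℤ) :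
    VZ ⊗[ℤ] R →ₗ[ℤ] R :=
  (TensorProduct.lid ℤ R).toLinearMap.comp (LinearMap.rTensor R α)

/-- `Δ` is a basis of the root system `Φ` (in the sense of Bourbaki): `Δ ⊆ Φ` is linearly
independent and every root is a linear combination of `Δ` with coefficients that are all
non-negative integers or all non-positive integers. -/
def IsBase (Φ Δ : Finset (VZ →ₗ[ℤ] ℤ)) : Prop :=
  Δ ⊆ Φ ∧ LinearIndependent ℤ (fun a : {x // x ∈ Δ} => (a : VZ →ₗ[ℤ] ℤ)) ∧
    ∀ β ∈ Φ, (∃ c : (VZ →ₗ[ℤ] ℤ) → ℕ, β = ∑ a ∈ Δ, (c a : ℤ) • a) ∨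
      ∃ c : (VZ →ₗ[ℤ] ℤ) → ℕ, β = -∑ a ∈ Δ, (c a : ℤ) • a

/-- `Φ⁺_Δ`, the positive roots with respect to the basis `Δ`. -/
noncomputable def PosRoots (Φ Δ : Finset (VZ →ₗ[ℤ] ℤ)) : Finset (VZ →ₗ[ℤ] ℤ) :=
  Φ.filter fun β => ∃ c : (VZ →ₗ[ℤ] ℤ) → ℕ, β = ∑ a ∈ Δ, (c a : ℤ) • a

/-- the open vector chamber `C^v_{R,Δ}`. -/
def chamberR (R : Type*) [AddCommGroup R] [LinearOrder R] [IsOrderedAddMonoid R] (Δ : Finset (VZ →ₗ[ℤ] ℤ)) :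
    Set (VZ ⊗[ℤ] R) :=
  {x | ∀ α ∈ Δ, 0 < rootR R α x}

/-- the closed vector chamber `C̄^v_{R,Δ}`. -/
def closedChamberR (R : Type*) [AddCommGroup R] [LinearOrder R] [IsOrderedAddMonoid R] (Δ : Finset (VZ →ₗ[ℤ] ℤ)) :
    Set (VZ ⊗[ℤ] R) :=
  {x | ∀ α ∈ Δ, 0 ≤ rootR R α x}

/-- the vector face `F^v_R(Δ, Δ_P)`. -/
def faceR (R : Type*) [AddCommGroup R] [LinearOrder R] [IsOrderedAddMonoid R] (Δ ΔP : Finset (VZ →ₗ[ℤ] ℤ)) :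
    Set (VZ ⊗[ℤ] R) :=
  {x | (∀ α ∈ ΔP, rootR R α x = 0) ∧ ∀ α ∈ Δ, α ∉ ΔP → 0 < rootR R α x}

/-- the Weyl group `W(Φ)`, generated by the reflections `r_α : x ↦ x − α(x)·α^∨`. -/
def Weyl (Φ : Finset (VZ →ₗ[ℤ] ℤ)) (coroot : (VZ →ₗ[ℤ] ℤ) → VZ) : Subgroup (VZ ≃ₗ[ℤ] VZ) :=
  Subgroup.closure {e : VZ ≃ₗ[ℤ] VZ | ∃ α ∈ Φ, ∀ x : VZ, e x = x - α x • coroot α}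

/-- the action of `w ∈ W(Φ)` on roots: `w(α) = α ∘ w⁻¹`. -/
def dAct (w : VZ ≃ₗ[ℤ] VZ) (α : VZ →ₗ[ℤ] ℤ) : VZ →ₗ[ℤ] ℤ :=
  α.comp w.symm.toLinearMap

/-- the action of `w ∈ W(Φ)` on `V_R = V_ℤ ⊗ R`. -/
noncomputable def tAct (R : Type*) [AddCommGroup R] [LinearOrder R] [IsOrderedAddMonoid R] (w : VZ ≃ₗ[ℤ] VZ) :
    VZ ⊗[ℤ] R ≃ₗ[ℤ] VZ ⊗[ℤ] R :=
  TensorProduct.congr w (LinearEquiv.refl ℤ R)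

end RootSetup


section DualAction

variable {VZ : Type*} [AddCommGroup VZ]

def dActLinear (w : VZ ≃ₗ[ℤ] VZ) : Module.Dual ℤ VZ →ₗ[ℤ] Module.Dual ℤ VZ :=
  w.symm.toLinearMap.dualMap

lemma dAct_injective (w : VZ ≃ₗ[ℤ] VZ) : Function.Injective (dAct w) :=
  w.symm.toLinearMap.dualMap_injective_of_surjective w.symm.surjective

@[simp] lemma dAct_one (β : Module.Dual ℤ VZ) : dAct 1 β = β := rfl

lemma dAct_mul (u v : VZ ≃ₗ[ℤ] VZ) (β : Module.Dual ℤ VZ) :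
    dAct (u * v) β = dAct u (dAct v β) := rfl

lemma dAct_neg (w : VZ ≃ₗ[ℤ] VZ) (β : Module.Dual ℤ VZ) : dAct w (-β) = -dAct w β :=
  map_neg (dActLinear w) β

lemma dAct_zsmul (w : VZ ≃ₗ[ℤ] VZ) (n : ℤ) (β : Module.Dual ℤ VZ) :
    dAct w (n • β) = n • dAct w β :=
  map_zsmul (dActLinear w) n β

lemma dAct_dAct_inv (w : VZ ≃ₗ[ℤ] VZ) (β : Module.Dual ℤ VZ) : dAct w (dAct w⁻¹ β) = β := by
  rw [← dAct_mul, mul_inv_cancel, dAct_one]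

end DualAction

structure RootData (VZ : Type*) [AddCommGroup VZ] where
  Φ : Finset (Module.Dual ℤ VZ)
  coroot : Module.Dual ℤ VZ → VZ
  zero_notMem : (0 : Module.Dual ℤ VZ) ∉ Φ
  apply_coroot_self : ∀ α ∈ Φ, α (coroot α) = 2
  reflect_mem : ∀ α ∈ Φ, ∀ β ∈ Φ, β - β (coroot α) • α ∈ Φ
  coroot_reflect : ∀ α ∈ Φ, ∀ β ∈ Φ,
    coroot (β - β (coroot α) • α) = coroot β - α (coroot β) • coroot α

namespace RootData

variable {VZ : Type*} [AddCommGroup VZ] (S : RootData VZ)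

section Reflections

/-- The reflection `r_α`; it is the identity (a junk value) for `α ∉ Φ`. -/
noncomputable def reflection (α : Module.Dual ℤ VZ) : VZ ≃ₗ[ℤ] VZ :=
  if h : α ∈ S.Φ then Module.reflection (S.apply_coroot_self α h) else 1

variable {S} {α β : Module.Dual ℤ VZ}

lemma reflection_apply (hα : α ∈ S.Φ) (x : VZ) :
    S.reflection α x = x - α x • S.coroot α := by
  rw [reflection, dif_pos hα, Module.reflection_apply]

lemma reflection_inv (hα : α ∈ S.Φ) : (S.reflection α)⁻¹ = S.reflection α := by
  rw [reflection, dif_pos hα, Module.reflection_inv]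

lemma reflection_mul_self (hα : α ∈ S.Φ) : S.reflection α * S.reflection α = 1 :=
  mul_eq_one_iff_eq_inv.mpr (reflection_inv hα).symm

lemma dAct_reflection (hα : α ∈ S.Φ) (β : Module.Dual ℤ VZ) :
    dAct (S.reflection α) β = β - β (S.coroot α) • α := by
  ext x
  have hsymm : (S.reflection α).symm = S.reflection α := reflection_inv hα
  simp only [dAct, LinearMap.comp_apply, LinearEquiv.coe_coe, hsymm, reflection_apply hα,
    map_sub, map_zsmul, smul_eq_mul, LinearMap.sub_apply, LinearMap.smul_apply]
  ring

lemma dAct_reflection_self (hα : α ∈ S.Φ) : dAct (S.reflection α) α = -α := by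
  rw [dAct_reflection hα, S.apply_coroot_self α hα]
  module

lemma involutive_dAct_reflection (hα : α ∈ S.Φ) : Function.Involutive (dAct (S.reflection α)) :=
  fun β => by rw [← dAct_mul, reflection_mul_self hα, dAct_one]

lemma weyl_eq_closure : Weyl S.Φ S.coroot = Subgroup.closure (S.reflection '' S.Φ) := by
  unfold Weyl
  congr 1
  ext e
  constructor
  · rintro ⟨α, hα, he⟩
    exact ⟨α, hα, LinearEquiv.ext fun x => by rw [he, reflection_apply hα]⟩
  · rintro ⟨α, hα, rfl⟩
    exact ⟨α, hα, reflection_apply hα⟩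

lemma reflection_mem_weyl (hα : α ∈ S.Φ) : S.reflection α ∈ Weyl S.Φ S.coroot := by
  rw [weyl_eq_closure]
  exact Subgroup.subset_closure ⟨α, hα, rfl⟩

lemma neg_mem (hβ : β ∈ S.Φ) : -β ∈ S.Φ := by
  simpa [S.apply_coroot_self β hβ, two_smul] using S.reflect_mem β hβ β hβ

lemma coroot_neg (hβ : β ∈ S.Φ) : S.coroot (-β) = -S.coroot β := by
  simpa [S.apply_coroot_self β hβ, two_smul] using S.coroot_reflect β hβ β hβ

lemma coroot_eq_two_smul_coroot_two_smul (hβ : β ∈ S.Φ) (h2β : (2 : ℤ) • β ∈ S.Φ) :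
    S.coroot β = (2 : ℤ) • S.coroot ((2 : ℤ) • β) := by
  have hβ2β : β (S.coroot ((2 : ℤ) • β)) = 1 := by
    have := S.apply_coroot_self _ h2β
    rw [LinearMap.smul_apply, smul_eq_mul] at this
    omega
  have hsub : (2 : ℤ) • β - ((2 : ℤ) • β) (S.coroot β) • β = -((2 : ℤ) • β) := by
    rw [LinearMap.smul_apply, S.apply_coroot_self β hβ]
    module
  have h := S.coroot_reflect β hβ _ h2β
  rw [hsub, coroot_neg h2β, hβ2β, one_smul] at h
  rw [two_smul]
  linear_combination (norm := module) h

lemma reflection_neg (hβ : β ∈ S.Φ) : S.reflection (-β) = S.reflection β := by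
  ext x
  simp [reflection_apply hβ, reflection_apply (neg_mem hβ), coroot_neg hβ]

lemma reflection_two_smul (hβ : β ∈ S.Φ) (h2β : (2 : ℤ) • β ∈ S.Φ) :
    S.reflection ((2 : ℤ) • β) = S.reflection β := by
  ext x
  rw [reflection_apply hβ, reflection_apply h2β, coroot_eq_two_smul_coroot_two_smul hβ h2β,
    LinearMap.smul_apply, smul_smul, smul_eq_mul, mul_comm]

lemma eq_or_eq_two_smul_of_eq_smul (hβ : β ∈ S.Φ) {a : Module.Dual ℤ VZ} {k : ℤ}
    (hk : β = k • a) (hk0 : 0 < k) : β = a ∨ β = (2 : ℤ) • a := by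
  have h : k * a (S.coroot β) = 2 := by
    rw [← smul_eq_mul, ← LinearMap.smul_apply, ← hk, S.apply_coroot_self β hβ]
  have hk2 : k ≤ 2 := Int.le_of_dvd two_pos ⟨_, h.symm⟩
  obtain rfl | rfl : k = 1 ∨ k = 2 := by omega
  · exact Or.inl (by rw [hk, one_smul])
  · exact Or.inr hk

end Reflections

section Symmetries

def symmetries : Subgroup (VZ ≃ₗ[ℤ] VZ) where
  carrier := {w | (∀ β, dAct w β ∈ S.Φ ↔ β ∈ S.Φ) ∧
    ∀ β ∈ S.Φ, S.coroot (dAct w β) = w (S.coroot β)}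
  one_mem' := ⟨fun _ => Iff.rfl, fun _ _ => rfl⟩
  mul_mem' := by
    rintro u v ⟨hu, hu'⟩ ⟨hv, hv'⟩
    refine ⟨fun β => by rw [dAct_mul, hu, hv], fun β hβ => ?_⟩
    rw [dAct_mul, hu' _ ((hv β).2 hβ), hv' β hβ]
    rfl
  inv_mem' := by
    rintro w ⟨hw, hw'⟩
    have hmem : ∀ β, dAct w⁻¹ β ∈ S.Φ ↔ β ∈ S.Φ := fun β => by
      rw [← hw, dAct_dAct_inv]
    refine ⟨hmem, fun β hβ => ?_⟩
    have h := hw' _ ((hmem β).2 hβ)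
    rw [dAct_dAct_inv] at h
    rw [h]
    exact (w.symm_apply_apply _).symm

variable {S} {α β γ : Module.Dual ℤ VZ} {w : VZ ≃ₗ[ℤ] VZ}

lemma reflection_mem_symmetries (hα : α ∈ S.Φ) : S.reflection α ∈ S.symmetries := by
  have hmem : ∀ β ∈ S.Φ, dAct (S.reflection α) β ∈ S.Φ := fun β hβ => by
    rw [dAct_reflection hα]
    exact S.reflect_mem α hα β hβ
  refine ⟨fun β => ⟨fun h => ?_, hmem β⟩, fun β hβ => ?_⟩
  · simpa [← dAct_mul, reflection_mul_self hα] using hmem _ h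
  · rw [dAct_reflection hα, S.coroot_reflect α hα β hβ, reflection_apply hα]

lemma weyl_le_symmetries : Weyl S.Φ S.coroot ≤ S.symmetries := by
  rw [weyl_eq_closure, Subgroup.closure_le]
  rintro _ ⟨α, hα, rfl⟩
  exact reflection_mem_symmetries hα

lemma dAct_mem (hw : w ∈ Weyl S.Φ S.coroot) (hβ : β ∈ S.Φ) : dAct w β ∈ S.Φ :=
  ((weyl_le_symmetries hw).1 β).2 hβ

lemma coroot_dAct (hw : w ∈ Weyl S.Φ S.coroot) (hβ : β ∈ S.Φ) :
    S.coroot (dAct w β) = w (S.coroot β) :=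
  (weyl_le_symmetries hw).2 β hβ

lemma reflection_dAct (hw : w ∈ Weyl S.Φ S.coroot) (hγ : γ ∈ S.Φ) :
    S.reflection (dAct w γ) = w * S.reflection γ * w⁻¹ := by
  ext x
  change _ = w (S.reflection γ (w.symm x))
  rw [reflection_apply (dAct_mem hw hγ), reflection_apply hγ, coroot_dAct hw hγ, map_sub,
    map_zsmul, LinearEquiv.apply_symm_apply]
  rfl

end Symmetries

section PositiveRoots

variable {S} {Δ : Finset (Module.Dual ℤ VZ)} {a β : Module.Dual ℤ VZ}

lemma mem_posRoots : β ∈ PosRoots S.Φ Δ ↔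
    β ∈ S.Φ ∧ ∃ c : Module.Dual ℤ VZ → ℕ, β = ∑ a ∈ Δ, (c a : ℤ) • a :=
  Finset.mem_filter

lemma posRoots_subset : PosRoots S.Φ Δ ⊆ S.Φ := Finset.filter_subset _ _

lemma base_subset_posRoots (hΔ : IsBase S.Φ Δ) : Δ ⊆ PosRoots S.Φ Δ := by
  intro a ha
  refine mem_posRoots.2 ⟨hΔ.1 ha, fun b => if b = a then 1 else 0, ?_⟩
  simp [ha]

lemma mem_posRoots_or_neg_mem (hΔ : IsBase S.Φ Δ) (hβ : β ∈ S.Φ) :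
    β ∈ PosRoots S.Φ Δ ∨ -β ∈ PosRoots S.Φ Δ := by
  rcases hΔ.2.2 β hβ with ⟨c, hc⟩ | ⟨c, hc⟩
  · exact Or.inl (mem_posRoots.2 ⟨hβ, c, hc⟩)
  · exact Or.inr (mem_posRoots.2 ⟨neg_mem hβ, c, by rw [hc, neg_neg]⟩)

lemma coeff_eq_zero (hΔ : IsBase S.Φ Δ) {m : Module.Dual ℤ VZ → ℤ}
    (hm : ∑ a ∈ Δ, m a • a = 0) : ∀ a ∈ Δ, m a = 0 :=
  (linearIndepOn_finset_iff (v := id)).1 hΔ.2.1 m hm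

lemma neg_notMem_posRoots (hΔ : IsBase S.Φ Δ) (hβ : β ∈ PosRoots S.Φ Δ) :
    -β ∉ PosRoots S.Φ Δ := by
  intro hnβ
  obtain ⟨hβΦ, c, hc⟩ := mem_posRoots.1 hβ
  obtain ⟨-, d, hd⟩ := mem_posRoots.1 hnβ
  have hcd := coeff_eq_zero hΔ (m := fun a => (c a : ℤ) + d a) (by
    simp only [add_smul, Finset.sum_add_distrib, ← hc, ← hd, add_neg_cancel])
  have hβ0 : β = 0 := by
    rw [hc]
    refine Finset.sum_eq_zero fun a ha => ?_
    have := hcd a ha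
    rw [show (c a : ℤ) = 0 by omega, zero_smul]
  exact S.zero_notMem (hβ0 ▸ hβΦ)

lemma mem_posRoots_of_coeff_pos (hΔ : IsBase S.Φ Δ) (hβ : β ∈ S.Φ)
    {m : Module.Dual ℤ VZ → ℤ} (hm : β = ∑ a ∈ Δ, m a • a) {b : Module.Dual ℤ VZ} (hb : b ∈ Δ)
    (hmb : 0 < m b) : β ∈ PosRoots S.Φ Δ := by
  refine (mem_posRoots_or_neg_mem hΔ hβ).resolve_right fun hnβ => ?_
  obtain ⟨-, d, hd⟩ := mem_posRoots.1 hnβ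
  have hmd := coeff_eq_zero hΔ (m := fun a => m a + d a) (by
    simp only [add_smul, Finset.sum_add_distrib, ← hm, ← hd, add_neg_cancel])
  have := hmd b hb
  omega

lemma pos_of_mem_posRoots {M : Type*} [AddCommMonoid M] [PartialOrder M]
    [IsOrderedCancelAddMonoid M] (f : Module.Dual ℤ VZ →+ M) (hf : ∀ a ∈ Δ, 0 < f a)
    (hβ : β ∈ PosRoots S.Φ Δ) : 0 < f β := by
  obtain ⟨hβΦ, c, hc⟩ := mem_posRoots.1 hβ
  have hfβ : f β = ∑ a ∈ Δ, c a • f a := by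
    simp only [hc, map_sum, natCast_zsmul, map_nsmul]
  obtain ⟨a, ha, hca⟩ : ∃ a ∈ Δ, c a ≠ 0 := by
    by_contra! h
    exact S.zero_notMem (by rwa [hc, Finset.sum_eq_zero fun a ha => by simp [h a ha]] at hβΦ)
  rw [hfβ]
  exact Finset.sum_pos' (fun b hb => nsmul_nonneg (hf b hb).le _) ⟨a, ha, nsmul_pos (hf a ha) hca⟩

lemma reflect_mem_posRoots (hΔ : IsBase S.Φ Δ) (ha : a ∈ Δ) (hβ : β ∈ PosRoots S.Φ Δ)
    (hβa : β ≠ a) (hβ2a : β ≠ (2 : ℤ) • a) : β - β (S.coroot a) • a ∈ PosRoots S.Φ Δ := by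
  obtain ⟨hβΦ, c, hc⟩ := mem_posRoots.1 hβ
  obtain ⟨b, hb, hba, hcb⟩ : ∃ b ∈ Δ, b ≠ a ∧ c b ≠ 0 := by
    by_contra! h
    have hβc : β = (c a : ℤ) • a := by
      rw [hc, Finset.sum_eq_single_of_mem a ha fun b hb hba => by rw [h b hb hba]; simp]
    have hca : c a ≠ 0 := fun h0 =>
      S.zero_notMem (by rwa [hβc, h0, Nat.cast_zero, zero_smul] at hβΦ)
    rcases eq_or_eq_two_smul_of_eq_smul hβΦ hβc (by omega) with h' | h'
    exacts [hβa h', hβ2a h']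
  refine mem_posRoots_of_coeff_pos hΔ (S.reflect_mem a (hΔ.1 ha) β hβΦ)
    (m := fun b => c b - if b = a then β (S.coroot a) else 0) ?_ hb (by simp [hba]; omega)
  simp only [sub_smul, Finset.sum_sub_distrib, ite_smul, zero_smul, Finset.sum_ite_eq', if_pos ha,
    ← hc]

end PositiveRoots

section PosCorootSum

variable {S} {Δ : Finset (Module.Dual ℤ VZ)} {a β : Module.Dual ℤ VZ}

variable (S) in
/-- `2ρ^∨`. -/
noncomputable def posCorootSum (Δ : Finset (Module.Dual ℤ VZ)) : VZ :=
  ∑ γ ∈ PosRoots S.Φ Δ, S.coroot γ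

lemma dAct_reflection_ne_of_mem_posRoots (hΔ : IsBase S.Φ Δ) (ha : a ∈ Δ)
    (hβ : β ∈ PosRoots S.Φ Δ) :
    dAct (S.reflection a) β ≠ a ∧ dAct (S.reflection a) β ≠ (2 : ℤ) • a := by
  have haΦ := hΔ.1 ha
  constructor <;> intro h <;> have h' := congrArg (dAct (S.reflection a)) h <;>
    rw [involutive_dAct_reflection haΦ] at h'
  · rw [h', dAct_reflection_self haΦ] at hβ
    exact neg_notMem_posRoots hΔ (base_subset_posRoots hΔ ha) hβ
  · rw [h', dAct_zsmul, dAct_reflection_self haΦ, smul_neg] at hβ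
    have h2a : (2 : ℤ) • a ∈ PosRoots S.Φ Δ :=
      mem_posRoots_of_coeff_pos hΔ (by simpa using neg_mem (posRoots_subset hβ))
        (m := fun b => if b = a then 2 else 0) (by simp [ha]) ha (by simp)
    exact neg_notMem_posRoots hΔ h2a hβ

lemma apply_posCorootSum_pos_of_mem (hΔ : IsBase S.Φ Δ) (ha : a ∈ Δ) :
    0 < a (S.posCorootSum Δ) := by
  have haΦ := hΔ.1 ha
  set r := S.reflection a
  have hcoroot : ∀ γ ∈ S.Φ, a (S.coroot (dAct r γ)) = -a (S.coroot γ) := fun γ hγ => by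
    rw [coroot_dAct (reflection_mem_weyl haΦ) hγ, reflection_apply haΦ, map_sub, map_zsmul,
      S.apply_coroot_self a haΦ, smul_eq_mul]
    ring
  rw [posCorootSum, map_sum, ← Finset.sum_filter_add_sum_filter_not (PosRoots S.Φ Δ)
    (fun γ => γ = a ∨ γ = (2 : ℤ) • a)]
  -- `r_a` permutes the other positive roots and negates `a(γ^∨)` on them
  have hrest : ∑ γ ∈ (PosRoots S.Φ Δ).filter (fun γ => ¬(γ = a ∨ γ = (2 : ℤ) • a)),
      a (S.coroot γ) = 0 := by
    refine Finset.sum_involution (fun γ _ => dAct r γ) (fun γ hγ => ?_) (fun γ hγ _ h => ?_)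
      (fun γ hγ => ?_) (fun γ _ => involutive_dAct_reflection haΦ γ)
    · rw [hcoroot γ (posRoots_subset (Finset.mem_filter.1 hγ).1), add_neg_cancel]
    · have := hcoroot γ (posRoots_subset (Finset.mem_filter.1 hγ).1)
      rw [h] at this
      omega
    · obtain ⟨hγ, hγa⟩ := Finset.mem_filter.1 hγ
      rw [not_or] at hγa
      have hrγ := reflect_mem_posRoots hΔ ha hγ hγa.1 hγa.2
      rw [← dAct_reflection haΦ] at hrγ
      rw [Finset.mem_filter, not_or]
      exact ⟨hrγ, dAct_reflection_ne_of_mem_posRoots hΔ ha hγ⟩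
  rw [hrest, add_zero]
  refine Finset.sum_pos (fun γ hγ => ?_)
    ⟨a, Finset.mem_filter.2 ⟨base_subset_posRoots hΔ ha, Or.inl rfl⟩⟩
  obtain ⟨hγPos, rfl | rfl⟩ := Finset.mem_filter.1 hγ
  · rw [S.apply_coroot_self γ haΦ]
    norm_num
  · have := S.apply_coroot_self _ (posRoots_subset hγPos)
    rw [LinearMap.smul_apply, smul_eq_mul] at this
    omega

lemma apply_posCorootSum_pos (hΔ : IsBase S.Φ Δ) (hβ : β ∈ PosRoots S.Φ Δ) :
    0 < β (S.posCorootSum Δ) :=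
  pos_of_mem_posRoots (Module.Dual.eval ℤ VZ (S.posCorootSum Δ)).toAddMonoidHom
    (fun _ ha => apply_posCorootSum_pos_of_mem hΔ ha) hβ

lemma apply_posCorootSum_ne_zero (hΔ : IsBase S.Φ Δ) (hβ : β ∈ S.Φ) :
    β (S.posCorootSum Δ) ≠ 0 := by
  rcases mem_posRoots_or_neg_mem hΔ hβ with h | h
  · exact (apply_posCorootSum_pos hΔ h).ne'
  · have := apply_posCorootSum_pos hΔ h
    rw [LinearMap.neg_apply] at this
    omega

end PosCorootSum

section InvariantForm

def invariantForm (φ ψ : Module.Dual ℤ VZ) : ℤ :=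
  ∑ δ ∈ S.Φ, φ (S.coroot δ) * ψ (S.coroot δ)

variable {S} {Δ : Finset (Module.Dual ℤ VZ)} {β γ : Module.Dual ℤ VZ}

lemma invariantForm_self_pos (hβ : β ∈ S.Φ) : 0 < S.invariantForm β β := by
  have h := Finset.single_le_sum (f := fun δ => β (S.coroot δ) * β (S.coroot δ))
    (fun δ _ => mul_self_nonneg _) hβ
  rw [S.apply_coroot_self β hβ] at h
  exact lt_of_lt_of_le (by norm_num) h

lemma two_mul_invariantForm (hγ : γ ∈ S.Φ) (φ : Module.Dual ℤ VZ) :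
    2 * S.invariantForm φ γ = S.invariantForm γ γ * φ (S.coroot γ) := by
  set r := S.reflection γ
  have hr : ∀ δ ∈ S.Φ, dAct r δ ∈ S.Φ := fun δ hδ => dAct_mem (reflection_mem_weyl hγ) hδ
  have hreindex : S.invariantForm φ γ =
      ∑ δ ∈ S.Φ, φ (S.coroot (dAct r δ)) * γ (S.coroot (dAct r δ)) :=
    (Finset.sum_nbij' (dAct r) (dAct r) hr hr (fun δ _ => involutive_dAct_reflection hγ δ)
      (fun δ _ => involutive_dAct_reflection hγ δ) fun δ _ => by rw [involutive_dAct_reflection hγ])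
  have hterm : ∀ δ ∈ S.Φ, φ (S.coroot (dAct r δ)) * γ (S.coroot (dAct r δ)) =
      -(φ (S.coroot δ) * γ (S.coroot δ)) + γ (S.coroot δ) * γ (S.coroot δ) * φ (S.coroot γ) :=
    fun δ hδ => by
      rw [coroot_dAct (reflection_mem_weyl hγ) hδ, reflection_apply hγ]
      simp only [map_sub, map_zsmul, smul_eq_mul, S.apply_coroot_self γ hγ]
      ring
  rw [Finset.sum_congr rfl hterm, Finset.sum_add_distrib, Finset.sum_neg_distrib,
    ← Finset.sum_mul] at hreindex
  unfold invariantForm at hreindex ⊢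
  linarith

lemma exists_apply_coroot_pos (hΔ : IsBase S.Φ Δ) (hβ : β ∈ PosRoots S.Φ Δ) :
    ∃ a ∈ Δ, 0 < β (S.coroot a) := by
  obtain ⟨hβΦ, c, hc⟩ := mem_posRoots.1 hβ
  have hexpand : S.invariantForm β β = ∑ a ∈ Δ, (c a : ℤ) * S.invariantForm β a := by
    conv_lhs => rw [invariantForm]; enter [2, δ, 2]; rw [hc]
    simp only [LinearMap.sum_apply, LinearMap.smul_apply, smul_eq_mul, Finset.mul_sum,
      invariantForm]
    rw [Finset.sum_comm]
    exact Finset.sum_congr rfl fun _ _ => Finset.sum_congr rfl fun _ _ => by ring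
  have hsum : ∑ _a ∈ Δ, (0 : ℤ) < ∑ a ∈ Δ, (c a : ℤ) * S.invariantForm β a := by
    rw [Finset.sum_const_zero, ← hexpand]
    exact invariantForm_self_pos hβΦ
  obtain ⟨a, ha, hpos⟩ := Finset.exists_lt_of_sum_lt hsum
  have hform := pos_of_mul_pos_right hpos (Int.natCast_nonneg _)
  refine ⟨a, ha, pos_of_mul_pos_right ?_ (invariantForm_self_pos (hΔ.1 ha)).le⟩
  rw [← two_mul_invariantForm (hΔ.1 ha)]
  exact mul_pos two_pos hform

end InvariantForm

section SimpleReflections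

variable {S} {Δ : Finset (Module.Dual ℤ VZ)} {a β : Module.Dual ℤ VZ} {w : VZ ≃ₗ[ℤ] VZ}

lemma reflection_mem_closure (hΔ : IsBase S.Φ Δ) (hβ : β ∈ S.Φ) :
    S.reflection β ∈ Submonoid.closure (S.reflection '' Δ) := by
  wlog hβ' : β ∈ PosRoots S.Φ Δ generalizing β
  · have := this (neg_mem hβ) ((mem_posRoots_or_neg_mem hΔ hβ).resolve_left hβ')
    rwa [reflection_neg hβ] at this
  induction hn : (β (S.posCorootSum Δ)).toNat using Nat.strong_induction_on generalizing β with
  | _ n ih =>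
  obtain ⟨a, ha, hβa⟩ := exists_apply_coroot_pos hΔ hβ'
  have haΦ := hΔ.1 ha
  have hra : S.reflection a ∈ Submonoid.closure (S.reflection '' Δ) :=
    Submonoid.subset_closure ⟨a, ha, rfl⟩
  by_cases hβ1 : β = a ∨ β = (2 : ℤ) • a
  · rcases hβ1 with rfl | rfl
    exacts [hra, by rwa [reflection_two_smul haΦ hβ]]
  rw [not_or] at hβ1
  set γ := β - β (S.coroot a) • a
  have hγ : γ ∈ PosRoots S.Φ Δ := reflect_mem_posRoots hΔ ha hβ' hβ1.1 hβ1.2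
  have hγn : (γ (S.posCorootSum Δ)).toNat < n := by
    have hγz := apply_posCorootSum_pos hΔ hγ
    have haz := apply_posCorootSum_pos_of_mem hΔ ha
    have : γ (S.posCorootSum Δ) < β (S.posCorootSum Δ) := by
      simp only [γ, LinearMap.sub_apply, LinearMap.smul_apply, smul_eq_mul]
      nlinarith
    omega
  have hrγ := ih _ hγn (posRoots_subset hγ) hγ rfl
  rw [← involutive_dAct_reflection haΦ β, dAct_reflection haΦ β,
    reflection_dAct (reflection_mem_weyl haΦ) (posRoots_subset hγ), reflection_inv haΦ]
  exact mul_mem (mul_mem hra hrγ) hra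

lemma mem_closure_of_mem_weyl (hΔ : IsBase S.Φ Δ) (hw : w ∈ Weyl S.Φ S.coroot) :
    w ∈ Submonoid.closure (S.reflection '' Δ) := by
  rw [weyl_eq_closure] at hw
  induction hw using Subgroup.closure_induction'' with
  | mem _ h =>
    obtain ⟨β, hβ, rfl⟩ := h
    exact reflection_mem_closure hΔ hβ
  | inv_mem _ h =>
    obtain ⟨β, hβ, rfl⟩ := h
    rw [reflection_inv hβ]
    exact reflection_mem_closure hΔ hβ
  | one => exact one_mem _
  | mul _ _ _ _ hx hy => exact mul_mem hx hy

lemma exists_eraseIdx_prod_eq (hΔ : IsBase S.Φ Δ) (ha : a ∈ Δ) :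
    ∀ l : List (VZ ≃ₗ[ℤ] VZ), (∀ g ∈ l, g ∈ S.reflection '' Δ) →
      dAct l.prod a ∉ PosRoots S.Φ Δ →
      ∃ i < l.length, (l.eraseIdx i).prod = l.prod * S.reflection a
  | [], _, hneg => absurd (base_subset_posRoots hΔ ha) (by simpa using hneg)
  | g :: l, hl, hneg => by
    obtain ⟨b, hb, rfl⟩ := hl g List.mem_cons_self
    have hbΦ := hΔ.1 hb
    have hl' : ∀ g ∈ l, g ∈ S.reflection '' Δ := fun g hg => hl g (List.mem_cons_of_mem _ hg)
    by_cases hpos : dAct l.prod a ∈ PosRoots S.Φ Δ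
    · have hvW : l.prod ∈ Weyl S.Φ S.coroot := list_prod_mem fun g hg => by
        obtain ⟨c, hc, rfl⟩ := hl' g hg
        exact reflection_mem_weyl (hΔ.1 hc)
      -- `r_b` makes the positive root `l.prod (a)` negative, so that root is `b` or `2b`
      have hb' : dAct l.prod a = b ∨ dAct l.prod a = (2 : ℤ) • b := by
        by_contra! h
        rw [List.prod_cons, dAct_mul, dAct_reflection hbΦ] at hneg
        exact hneg (reflect_mem_posRoots hΔ hb hpos h.1 h.2)
      have hrb : l.prod * S.reflection a * (l.prod)⁻¹ = S.reflection b := by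
        rw [← reflection_dAct hvW (hΔ.1 ha)]
        rcases hb' with h | h
        · rw [h]
        · rw [h, reflection_two_smul hbΦ (h ▸ dAct_mem hvW (hΔ.1 ha))]
      refine ⟨0, by simp, ?_⟩
      rw [List.eraseIdx_cons_zero, List.prod_cons, ← hrb]
      simp [mul_assoc, reflection_mul_self (hΔ.1 ha)]
    · obtain ⟨i, hi, h⟩ := exists_eraseIdx_prod_eq hΔ ha l hl' hpos
      exact ⟨i + 1, by simpa using hi, by
        rw [List.eraseIdx_cons_succ, List.prod_cons, List.prod_cons, h, mul_assoc]⟩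

lemma list_prod_eq_one (hΔ : IsBase S.Φ Δ) (l : List (VZ ≃ₗ[ℤ] VZ))
    (hl : ∀ g ∈ l, g ∈ S.reflection '' Δ)
    (hpos : ∀ β ∈ PosRoots S.Φ Δ, dAct l.prod β ∈ PosRoots S.Φ Δ) : l.prod = 1 := by
  induction hn : l.length using Nat.strong_induction_on generalizing l with
  | _ n ih =>
  rcases l.eq_nil_or_concat' with rfl | ⟨l, g, rfl⟩
  · rfl
  obtain ⟨a, ha, rfl⟩ := hl g (by simp)
  have hl' : ∀ g ∈ l, g ∈ S.reflection '' Δ := fun g hg => hl g (by simp [hg])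
  have hprod : (l ++ [S.reflection a]).prod = l.prod * S.reflection a := by simp
  have hneg : dAct l.prod a ∉ PosRoots S.Φ Δ := fun h => by
    have := hpos a (base_subset_posRoots hΔ ha)
    rw [hprod, dAct_mul, dAct_reflection_self (hΔ.1 ha), dAct_neg] at this
    exact neg_notMem_posRoots hΔ h this
  obtain ⟨i, hi, hdel⟩ := exists_eraseIdx_prod_eq hΔ ha l hl' hneg
  rw [hprod, ← hdel]
  refine ih _ ?_ _ (fun g hg => hl' g (List.mem_of_mem_eraseIdx hg)) (by rwa [hdel, ← hprod]) rfl
  simp only [List.length_eraseIdx, hi, if_true, List.length_append, List.length_singleton] at hn ⊢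
  omega

lemma eq_one_of_forall_dAct_mem_posRoots (hΔ : IsBase S.Φ Δ) (hw : w ∈ Weyl S.Φ S.coroot)
    (hpos : ∀ β ∈ PosRoots S.Φ Δ, dAct w β ∈ PosRoots S.Φ Δ) : w = 1 := by
  obtain ⟨l, hl, rfl⟩ := Submonoid.exists_list_of_mem_closure (mem_closure_of_mem_weyl hΔ hw)
  exact list_prod_eq_one hΔ l hl hpos

end SimpleReflections

section PositiveSystems

variable {S} {Δ : Finset (Module.Dual ℤ VZ)} {a : Module.Dual ℤ VZ} {w w' : VZ ≃ₗ[ℤ] VZ}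
variable {M : Type*} [AddCommGroup M] [LinearOrder M] [IsOrderedAddMonoid M]
  (L : Module.Dual ℤ VZ →+ M)

variable (S) in
noncomputable def numNeg (Δ : Finset (Module.Dual ℤ VZ)) (w : VZ ≃ₗ[ℤ] VZ) : ℕ :=
  ((PosRoots S.Φ Δ).filter fun β => L (dAct w β) < 0).card

lemma numNeg_mul_reflection_lt (hΔ : IsBase S.Φ Δ) (ha : a ∈ Δ) (hwa : L (dAct w a) < 0) :
    S.numNeg L Δ (w * S.reflection a) < S.numNeg L Δ w := by
  have haΦ := hΔ.1 ha
  have haPos := base_subset_posRoots hΔ ha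
  have hwa' : 0 < L (dAct w (-a)) := by rw [dAct_neg, map_neg]; exact neg_pos.2 hwa
  set T := (PosRoots S.Φ Δ).filter fun β => L (dAct w β) < 0
  -- `r_a` maps the roots counted for `w r_a` injectively into those counted for `w`, minus `a`
  have hmaps : ∀ β ∈ (PosRoots S.Φ Δ).filter (fun β => L (dAct (w * S.reflection a) β) < 0),
      dAct (S.reflection a) β ∈ T.erase a := by
    intro β hβ
    obtain ⟨hβPos, hβL⟩ := Finset.mem_filter.1 hβ
    rw [dAct_mul] at hβL
    have hβa : β ≠ a := by
      rintro rfl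
      rw [dAct_reflection_self haΦ] at hβL
      exact lt_asymm hβL hwa'
    have hβ2a : β ≠ (2 : ℤ) • a := by
      rintro rfl
      rw [dAct_zsmul, dAct_reflection_self haΦ, dAct_zsmul, map_zsmul] at hβL
      exact lt_asymm hβL (zsmul_pos hwa' two_pos)
    have hrβ := reflect_mem_posRoots hΔ ha hβPos hβa hβ2a
    rw [← dAct_reflection haΦ] at hrβ
    exact Finset.mem_erase.2 ⟨(dAct_reflection_ne_of_mem_posRoots hΔ ha hβPos).1,
      Finset.mem_filter.2 ⟨hrβ, hβL⟩⟩
  calc S.numNeg L Δ (w * S.reflection a)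
      ≤ (T.erase a).card :=
        Finset.card_le_card_of_injOn _ hmaps fun _ _ _ _ h => dAct_injective _ h
    _ < T.card := Finset.card_erase_lt_of_mem (Finset.mem_filter.2 ⟨haPos, hwa⟩)

lemma exists_forall_base_pos (hΔ : IsBase S.Φ Δ) (hL : ∀ β ∈ S.Φ, L β ≠ 0) :
    ∃ w ∈ Weyl S.Φ S.coroot, ∀ a ∈ Δ, 0 < L (dAct w a) := by
  suffices ∀ n, ∀ w ∈ Weyl S.Φ S.coroot, S.numNeg L Δ w = n →
      ∃ w ∈ Weyl S.Φ S.coroot, ∀ a ∈ Δ, 0 < L (dAct w a) from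
    this _ 1 (one_mem _) rfl
  intro n
  induction n using Nat.strong_induction_on with
  | _ n ih =>
  intro w hw hn
  by_cases hpos : ∀ a ∈ Δ, 0 < L (dAct w a)
  · exact ⟨w, hw, hpos⟩
  push Not at hpos
  obtain ⟨a, ha, hwa⟩ := hpos
  have hwa' := lt_of_le_of_ne hwa (hL _ (dAct_mem hw (hΔ.1 ha)))
  exact ih _ (hn ▸ numNeg_mul_reflection_lt L hΔ ha hwa') _
    (mul_mem hw (reflection_mem_weyl (hΔ.1 ha))) rfl

lemma eq_of_forall_base_pos (hΔ : IsBase S.Φ Δ) (hw : w ∈ Weyl S.Φ S.coroot)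
    (hw' : w' ∈ Weyl S.Φ S.coroot) (hpos : ∀ a ∈ Δ, 0 < L (dAct w a))
    (hpos' : ∀ a ∈ Δ, 0 < L (dAct w' a)) : w' = w := by
  have hposRoots : ∀ {u : VZ ≃ₗ[ℤ] VZ}, (∀ a ∈ Δ, 0 < L (dAct u a)) →
      ∀ β ∈ PosRoots S.Φ Δ, 0 < L (dAct u β) := fun hu β hβ =>
    pos_of_mem_posRoots (L.comp (dActLinear _).toAddMonoidHom) hu hβ
  have hstab : ∀ β ∈ PosRoots S.Φ Δ, dAct (w⁻¹ * w') β ∈ PosRoots S.Φ Δ := by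
    intro β hβ
    have hw'β := hposRoots hpos' β hβ
    refine (mem_posRoots_or_neg_mem hΔ
      (dAct_mem (mul_mem (inv_mem hw) hw') (posRoots_subset hβ))).resolve_right fun h => ?_
    have := hposRoots hpos _ h
    rw [dAct_neg, dAct_mul, dAct_dAct_inv, map_neg] at this
    exact lt_asymm hw'β (neg_pos.1 this)
  exact (inv_mul_eq_one.1 (eq_one_of_forall_dAct_mem_posRoots hΔ
    (mul_mem (inv_mem hw) hw') hstab)).symm

end PositiveSystems

end RootData

section ValuesInR

variable {VZ : Type*} [AddCommGroup VZ]
  {R : Type*} [AddCommGroup R] [LinearOrder R] [IsOrderedAddMonoid R]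

lemma rootR_apply (α : Module.Dual ℤ VZ) (x : VZ ⊗[ℤ] R) :
    rootR R α x = TensorProduct.lid ℤ R (LinearMap.rTensor R α x) := rfl

lemma rootR_tmul (α : Module.Dual ℤ VZ) (v : VZ) (t : R) : rootR R α (v ⊗ₜ t) = α v • t := by
  rw [rootR_apply, LinearMap.rTensor_tmul, TensorProduct.lid_tmul]

noncomputable def rootEval (x : VZ ⊗[ℤ] R) : Module.Dual ℤ VZ →+ R where
  toFun α := rootR R α x
  map_zero' := by rw [rootR_apply, LinearMap.rTensor_zero, LinearMap.zero_apply, map_zero]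
  map_add' α β := by
    rw [rootR_apply, LinearMap.rTensor_add, LinearMap.add_apply, map_add, ← rootR_apply,
      ← rootR_apply]

lemma rootEval_apply (x : VZ ⊗[ℤ] R) (α : Module.Dual ℤ VZ) : rootEval x α = rootR R α x := rfl

noncomputable def lexEval (x : VZ ⊗[ℤ] R) (z : VZ) : Module.Dual ℤ VZ →+ Lex (R × ℤ) where
  toFun β := toLex (rootEval x β, β z)
  map_zero' := by simp only [map_zero, LinearMap.zero_apply]; rfl
  map_add' α β := by simp only [map_add, LinearMap.add_apply]; rfl

lemma lexEval_pos_iff {x : VZ ⊗[ℤ] R} {z : VZ} {β : Module.Dual ℤ VZ} :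
    0 < lexEval x z β ↔ 0 < rootR R β x ∨ (rootR R β x = 0 ∧ 0 < β z) := by
  rw [Prod.Lex.lt_iff]
  simp [lexEval, rootEval, eq_comm]

lemma exists_pos_forall_pos_add_zsmul [Nontrivial R]
    (hdiv : ∀ k : ℤ, k ≠ 0 → ∀ r : R, ∃ s : R, k • s = r) {ι : Type*} (s : Finset ι)
    (p : ι → R) (k : ι → ℤ) (hp : ∀ i ∈ s, 0 < p i) :
    ∃ ε : R, 0 < ε ∧ ∀ i ∈ s, 0 < p i + k i • ε := by
  -- quantifying over all `δ ≤ ε` lets the induction step shrink `ε`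
  suffices ∃ ε : R, 0 < ε ∧ ∀ δ, 0 < δ → δ ≤ ε → ∀ i ∈ s, 0 < p i + k i • δ by
    obtain ⟨ε, hε, h⟩ := this
    exact ⟨ε, hε, h ε hε le_rfl⟩
  induction s using Finset.induction_on with
  | empty =>
    obtain ⟨ε, hε⟩ := exists_zero_lt (α := R)
    exact ⟨ε, hε, by simp⟩
  | insert i s _ ih =>
    obtain ⟨ε, hε, hs⟩ := ih fun j hj => hp j (Finset.mem_insert_of_mem hj)
    have hn : (0 : ℤ) < |k i| + 1 := by positivity
    obtain ⟨η, hη⟩ := hdiv _ hn.ne' (p i)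
    have hη0 : 0 < η := by
      by_contra! h
      have := zsmul_le_zsmul_right hn.le h
      rw [hη, zsmul_zero] at this
      exact (hp i (Finset.mem_insert_self i s)).not_ge this
    refine ⟨min ε η, lt_min hε hη0, fun δ hδ hδε => ?_⟩
    rw [Finset.forall_mem_insert]
    refine ⟨?_, hs δ hδ (hδε.trans (min_le_left _ _))⟩
    calc 0 < η := hη0
      _ = p i - |k i| • η := by rw [← hη, add_zsmul, one_zsmul]; abel
      _ ≤ p i - |k i| • δ := sub_le_sub_left (zsmul_le_zsmul_right (abs_nonneg _)
          (hδε.trans (min_le_right _ _))) _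
      _ ≤ p i + k i • δ := by
          rw [sub_eq_add_neg, ← neg_zsmul]
          exact add_le_add_right (zsmul_le_zsmul_left hδ.le (neg_abs_le _)) _

end ValuesInR

namespace RootData

variable {VZ : Type*} [AddCommGroup VZ] {S : RootData VZ}
  {R : Type*} [AddCommGroup R] [LinearOrder R] [IsOrderedAddMonoid R]

lemma mem_closedChamberR_and_nonempty_iff [Nontrivial R]
    (hdiv : ∀ k : ℤ, k ≠ 0 → ∀ r : R, ∃ s : R, k • s = r) {Δ' D : Finset (Module.Dual ℤ VZ)}
    (hΔ' : IsBase S.Φ Δ') (hD : D ⊆ S.Φ) (x : VZ ⊗[ℤ] R) :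
    (x ∈ closedChamberR R D ∧ (chamberR R D ∩ {y | y - x ∈ chamberR R Δ'}).Nonempty) ↔
      ∀ β ∈ D, 0 < lexEval x (S.posCorootSum Δ') β := by
  set z := S.posCorootSum Δ'
  constructor
  · rintro ⟨hx, y, hy, hyx⟩ β hβ
    refine lexEval_pos_iff.2 ((hx β hβ).lt_or_eq.imp id fun h0 => ⟨h0.symm, ?_⟩)
    -- `β(x) = 0 < β(y)` and `y - x ∈ C^v_{R,Δ'}` force `β ∈ Φ⁺_{Δ'}`
    refine apply_posCorootSum_pos hΔ'
      ((mem_posRoots_or_neg_mem hΔ' (hD hβ)).resolve_right fun hneg => ?_)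
    have h1 : 0 < -rootR R β (y - x) := by
      simpa only [map_neg, rootEval_apply] using pos_of_mem_posRoots (rootEval (y - x)) hyx hneg
    rw [map_sub, ← h0, sub_zero] at h1
    exact lt_asymm (hy β hβ) (neg_pos.1 h1)
  · intro hpos
    obtain ⟨ε, hε, hsmall⟩ := exists_pos_forall_pos_add_zsmul hdiv
      (D.filter fun β => 0 < rootR R β x) (fun β => rootR R β x) (fun β => β z)
      (fun β hβ => (Finset.mem_filter.1 hβ).2)
    refine ⟨fun β hβ => ?_, x + z ⊗ₜ ε, fun β hβ => ?_, fun a ha => ?_⟩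
    · rcases lexEval_pos_iff.1 (hpos β hβ) with h | h
      exacts [h.le, h.1.ge]
    · rw [map_add, rootR_tmul]
      rcases lexEval_pos_iff.1 (hpos β hβ) with h | ⟨h0, hz⟩
      · exact hsmall β (Finset.mem_filter.2 ⟨hβ, h⟩)
      · rw [h0, zero_add]
        exact zsmul_pos hε hz
    · rw [add_sub_cancel_left, rootR_tmul]
      exact zsmul_pos hε (apply_posCorootSum_pos_of_mem hΔ' ha)

end RootData

theorem statement8_general {VZ : Type*} [AddCommGroup VZ]
    {R : Type*} [AddCommGroup R] [LinearOrder R] [IsOrderedAddMonoid R] [Nontrivial R]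
    (hdiv : ∀ k : ℤ, k ≠ 0 → ∀ r : R, ∃ s : R, k • s = r)
    (Φ : Finset (VZ →ₗ[ℤ] ℤ)) (coroot : (VZ →ₗ[ℤ] ℤ) → VZ)
    (h0 : (0 : VZ →ₗ[ℤ] ℤ) ∉ Φ)
    (h2 : ∀ α ∈ Φ, α (coroot α) = 2)
    (hrefl : ∀ α ∈ Φ, ∀ β ∈ Φ, β - β (coroot α) • α ∈ Φ)
    (hcorefl : ∀ α ∈ Φ, ∀ β ∈ Φ,
      coroot (β - β (coroot α) • α) = coroot β - α (coroot β) • coroot α)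
    (x : VZ ⊗[ℤ] R)
    (Δ Δ' : Finset (VZ →ₗ[ℤ] ℤ)) (hΔ : IsBase Φ Δ) (hΔ' : IsBase Φ Δ') :
    ∃ w : VZ ≃ₗ[ℤ] VZ, w ∈ Weyl Φ coroot ∧
      (x ∈ closedChamberR R (Δ.image (dAct w)) ∧
        (chamberR R (Δ.image (dAct w)) ∩ {y : VZ ⊗[ℤ] R | y - x ∈ chamberR R Δ'}).Nonempty) ∧
      ∀ w' : VZ ≃ₗ[ℤ] VZ, w' ∈ Weyl Φ coroot →
        (x ∈ closedChamberR R (Δ.image (dAct w')) ∧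
          (chamberR R (Δ.image (dAct w')) ∩
            {y : VZ ⊗[ℤ] R | y - x ∈ chamberR R Δ'}).Nonempty) →
        w' = w := by
  let S : RootData VZ := ⟨Φ, coroot, h0, h2, hrefl, hcorefl⟩
  set L := lexEval x (S.posCorootSum Δ')
  have hL : ∀ β ∈ S.Φ, L β ≠ 0 := fun β hβ h =>
    RootData.apply_posCorootSum_ne_zero hΔ' hβ (congrArg (fun p => (ofLex p).2) h)
  have hchar : ∀ w ∈ Weyl S.Φ S.coroot,
      (x ∈ closedChamberR R (Δ.image (dAct w)) ∧
        (chamberR R (Δ.image (dAct w)) ∩ {y | y - x ∈ chamberR R Δ'}).Nonempty) ↔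
      ∀ a ∈ Δ, 0 < L (dAct w a) := fun w hw => by
    rw [RootData.mem_closedChamberR_and_nonempty_iff hdiv hΔ'
        (Finset.image_subset_iff.2 fun a ha => RootData.dAct_mem hw (hΔ.1 ha)),
      Finset.forall_mem_image]
  obtain ⟨w, hw, hpos⟩ := RootData.exists_forall_base_pos L hΔ hL
  exact ⟨w, hw, (hchar w hw).2 hpos, fun w' hw' h =>
    RootData.eq_of_forall_base_pos L hΔ hw hw' hpos ((hchar w' hw').1 h)⟩

/-- **Statement 8.** If `R` is divisible, then for every `x ∈ V_R` and all bases `Δ, Δ'`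
of `Φ` there is a unique `w ∈ W(Φ)` with `x ∈ C̄^v_{R,w(Δ)}` and
`C^v_{R,w(Δ)} ∩ (x + C^v_{R,Δ'}) ≠ ∅`. -/
theorem statement8 {VZ : Type*} [AddCommGroup VZ] [Module.Free ℤ VZ]
    {R : Type*} [AddCommGroup R] [LinearOrder R] [IsOrderedAddMonoid R] [Nontrivial R]
    (hdiv : ∀ k : ℤ, k ≠ 0 → ∀ r : R, ∃ s : R, k • s = r)
    (Φ : Finset (VZ →ₗ[ℤ] ℤ)) (coroot : (VZ →ₗ[ℤ] ℤ) → VZ)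
    (h0 : (0 : VZ →ₗ[ℤ] ℤ) ∉ Φ)
    (h2 : ∀ α ∈ Φ, α (coroot α) = 2)
    (hrefl : ∀ α ∈ Φ, ∀ β ∈ Φ, β - β (coroot α) • α ∈ Φ)
    (hcorefl : ∀ α ∈ Φ, ∀ β ∈ Φ,
      coroot (β - β (coroot α) • α) = coroot β - α (coroot β) • coroot α)
    (hspan : Submodule.span ℤ (coroot '' (Φ : Set (VZ →ₗ[ℤ] ℤ))) = ⊤)
    (hnd : ∀ x : VZ, (∀ α ∈ Φ, α x = 0) → x = 0)
    (x : VZ ⊗[ℤ] R)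
    (Δ Δ' : Finset (VZ →ₗ[ℤ] ℤ)) (hΔ : IsBase Φ Δ) (hΔ' : IsBase Φ Δ') :
    ∃ w : VZ ≃ₗ[ℤ] VZ, w ∈ Weyl Φ coroot ∧
      (x ∈ closedChamberR R (Δ.image (dAct w)) ∧
        (chamberR R (Δ.image (dAct w)) ∩ {y : VZ ⊗[ℤ] R | y - x ∈ chamberR R Δ'}).Nonempty) ∧
      ∀ w' : VZ ≃ₗ[ℤ] VZ, w' ∈ Weyl Φ coroot →
        (x ∈ closedChamberR R (Δ.image (dAct w')) ∧
          (chamberR R (Δ.image (dAct w')) ∩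
            {y : VZ ⊗[ℤ] R | y - x ∈ chamberR R Δ'}).Nonempty) →
        w' = w :=
  statement8_general hdiv Φ coroot h0 h2 hrefl hcorefl x Δ Δ' hΔ hΔ'
end

section
/- The following are equivalent: (i) L^u_max ≠ ∅ for every u ∈ K^×; (ii) L^1_max ≠ ∅. Moreover, if these conditions hold, then for every u ∈ K^×, ω(L^u_max) = ω(L^1_max) + ω(u) as subsets of Λ'. -/
section QuadSetup

variable {K L Λ' : Type*} [Field K] [Field L] [Algebra K L] [AddCommGroup Λ'] [LinearOrder Λ']
    [IsOrderedAddMonoid Λ']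

/-- `L^u_max`: the set of `y ∈ L` of trace `u ∈ K` at which `z ↦ ω(y + z)`, `z ∈ L⁰`,
attains its maximum at `z = 0`. -/
def Lmax (τ : L ≃ₐ[K] L) (ω : AddValuation L (WithTop Λ')) (u : K) : Set L :=
  {y : L | y + τ y = algebraMap K L u ∧ ∀ z : L, z + τ z = 0 → ω (y + z) ≤ ω y}

/-- `ω(L^×)` as a set of values. -/
def wLx (ω : AddValuation L (WithTop Λ')) : Set (WithTop Λ') :=
  {c | ∃ y : L, y ≠ 0 ∧ ω y = c}

/-- `ω(K^×)` as a set of values. -/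
def wKx (K : Type*) [Field K] [Algebra K L] (ω : AddValuation L (WithTop Λ')) :
    Set (WithTop Λ') :=
  {c | ∃ u : K, u ≠ 0 ∧ ω (algebraMap K L u) = c}

/-- `ω(L⁰ ∖ {0})` as a set of values. -/
def wL0 (τ : L ≃ₐ[K] L) (ω : AddValuation L (WithTop Λ')) : Set (WithTop Λ') :=
  {c | ∃ z : L, z ≠ 0 ∧ z + τ z = 0 ∧ ω z = c}

/-- `S = {ω(v) : (u, v) ∈ H, v ≠ 0}`, where `H = {(u,v) : u·τ(u) = v + τ(v)}`. -/
def SH (τ : L ≃ₐ[K] L) (ω : AddValuation L (WithTop Λ')) : Set (WithTop Λ') :=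
  {c | ∃ u v : L, u * τ u = v + τ v ∧ v ≠ 0 ∧ ω v = c}

/-- `ω(N(L^×))` as a set of values. -/
def wN (τ : L ≃ₐ[K] L) (ω : AddValuation L (WithTop Λ')) : Set (WithTop Λ') :=
  {c | ∃ z : L, z ≠ 0 ∧ ω (z * τ z) = c}

end QuadSetup


section Lmax

variable {K L Λ' : Type*} [Field K] [Field L] [Algebra K L]
    [AddCommGroup Λ'] [LinearOrder Λ'] [IsOrderedAddMonoid Λ']
    (τ : L ≃ₐ[K] L) (ω : AddValuation L (WithTop Λ'))

theorem algebraMap_mul_mem_Lmax (c : K) {u : K} {y : L} (hy : y ∈ Lmax τ ω u) :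
    algebraMap K L c * y ∈ Lmax τ ω (c * u) := by
  obtain ⟨htrace, hmax⟩ := hy
  rcases eq_or_ne c 0 with rfl | hc
  · simp [Lmax]
  have hcL : algebraMap K L c ≠ 0 := (map_ne_zero _).mpr hc
  refine ⟨by rw [map_mul, τ.commutes, ← mul_add, htrace, map_mul], fun z hz => ?_⟩
  have hz' : (algebraMap K L c)⁻¹ * z + τ ((algebraMap K L c)⁻¹ * z) = 0 := by
    rw [map_mul, map_inv₀, τ.commutes, ← mul_add, hz, mul_zero]
  calc ω (algebraMap K L c * y + z)
      = ω (algebraMap K L c) + ω (y + (algebraMap K L c)⁻¹ * z) := by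
        rw [← ω.map_mul, mul_add, mul_inv_cancel_left₀ hcL]
    _ ≤ ω (algebraMap K L c) + ω y := add_le_add_right (hmax _ hz') _
    _ = ω (algebraMap K L c * y) := (ω.map_mul _ _).symm

theorem Lmax_eq_image_Lmax_one {u : K} (hu : u ≠ 0) :
    Lmax τ ω u = (algebraMap K L u * ·) '' Lmax τ ω 1 := by
  refine Set.Subset.antisymm (fun y hy => ⟨(algebraMap K L u)⁻¹ * y, ?_, ?_⟩) ?_
  · simpa [inv_mul_cancel₀ hu] using algebraMap_mul_mem_Lmax τ ω u⁻¹ hy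
  · exact mul_inv_cancel_left₀ ((map_ne_zero _).mpr hu) y
  · rintro _ ⟨y, hy, rfl⟩
    simpa using algebraMap_mul_mem_Lmax τ ω u hy

end Lmax

theorem statement13_general {K L Λ' : Type*} [Field K] [Field L] [Algebra K L]
    [AddCommGroup Λ'] [LinearOrder Λ'] [IsOrderedAddMonoid Λ']
    (τ : L ≃ₐ[K] L)
    (ω : AddValuation L (WithTop Λ'))
    :
    ((∀ u : K, u ≠ 0 → (Lmax τ ω u).Nonempty) ↔ (Lmax τ ω (1 : K)).Nonempty) ∧
    ((Lmax τ ω (1 : K)).Nonempty → ∀ u : K, u ≠ 0 →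
      {c : WithTop Λ' | ∃ y ∈ Lmax τ ω u, ω y = c} =
        (fun c => c + ω (algebraMap K L u)) ''
          {c : WithTop Λ' | ∃ y ∈ Lmax τ ω (1 : K), ω y = c}) := by
  refine ⟨⟨fun h => h 1 one_ne_zero, fun h u hu => ?_⟩, fun _ u hu => ?_⟩
  · rw [Lmax_eq_image_Lmax_one τ ω hu]
    exact h.image _
  · ext c
    simp only [Lmax_eq_image_Lmax_one τ ω hu, Set.mem_image, Set.mem_ofPred_eq,
      exists_exists_and_eq_and, ω.map_mul, add_comm]

/-- **Statement 13.** `L^u_max ≠ ∅` for all `u ∈ K^×` iff `L^1_max ≠ ∅`; and in that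
case `ω(L^u_max) = ω(L^1_max) + ω(u)` for every `u ∈ K^×`. -/
theorem statement13 {K L Λ' : Type*} [Field K] [Field L] [Algebra K L]
    [AddCommGroup Λ'] [LinearOrder Λ'] [IsOrderedAddMonoid Λ']
    (τ : L ≃ₐ[K] L) (hτ2 : ∀ x : L, τ (τ x) = x) (hτne : ∃ x : L, τ x ≠ x)
    (hfix : ∀ x : L, τ x = x ↔ ∃ k : K, algebraMap K L k = x)
    (hrank : Module.finrank K L = 2)
    (ω : AddValuation L (WithTop Λ')) (hωτ : ∀ x : L, ω (τ x) = ω x)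
    :
    ((∀ u : K, u ≠ 0 → (Lmax τ ω u).Nonempty) ↔ (Lmax τ ω (1 : K)).Nonempty) ∧
    ((Lmax τ ω (1 : K)).Nonempty → ∀ u : K, u ≠ 0 →
      {c : WithTop Λ' | ∃ y ∈ Lmax τ ω u, ω y = c} =
        (fun c => c + ω (algebraMap K L u)) ''
          {c : WithTop Λ' | ∃ y ∈ Lmax τ ω (1 : K), ω y = c}) :=
  statement13_general τ ω
end

section
/- Assume L¹_max = ∅. Then: (a) for every (u, v) ∈ H with v ≠ 0, there exists z ∈ L⁰ with ω(v + z) > ω(v); (b) S = ω(L⁰ ∖ {0}). -/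
section Improvement

variable {K L Λ' : Type*} [Field K] [Field L] [Algebra K L] [AddCommGroup Λ'] [LinearOrder Λ']
    [IsOrderedAddMonoid Λ'] (τ : L ≃ₐ[K] L) (ω : AddValuation L (WithTop Λ'))

theorem exists_trace_zero_lt_of_trace_ne_zero (hτ2 : ∀ x : L, τ (τ x) = x)
    (hempty : Lmax τ ω (1 : K) = ∅) {v : L} (hv : v + τ v ≠ 0) :
    ∃ z : L, z + τ z = 0 ∧ ω v < ω (v + z) := by
  set t := v + τ v
  have ht_fixed : τ t = t := by rw [map_add, hτ2, add_comm]
  set y := v * t⁻¹ with hy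
  have hv_eq : v = t * y := by rw [hy, mul_left_comm, mul_inv_cancel₀ hv, mul_one]
  have hy_trace : y + τ y = algebraMap K L 1 := by
    rw [hy, map_one, map_mul, map_inv₀, ht_fixed, ← add_mul, mul_inv_cancel₀ hv]
  obtain ⟨z, hz, hlt⟩ : ∃ z : L, z + τ z = 0 ∧ ω y < ω (y + z) := by
    have hy_not_max : y ∉ Lmax τ ω (1 : K) := hempty ▸ Set.notMem_empty _
    simpa only [Lmax, Set.mem_ofPred_eq, hy_trace, true_and, not_forall, not_le, exists_prop]
      using hy_not_max
  refine ⟨t * z, by rw [map_mul, ht_fixed, ← mul_add, hz, mul_zero], ?_⟩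
  calc ω v = ω t + ω y := by rw [hv_eq, ω.map_mul]
    _ < ω t + ω (y + z) := WithTop.add_lt_add_left (ω.ne_top_iff.mpr hv) hlt
    _ = ω (v + t * z) := by rw [← ω.map_mul, mul_add, ← hv_eq]

theorem exists_trace_zero_lt (hτ2 : ∀ x : L, τ (τ x) = x) (hempty : Lmax τ ω (1 : K) = ∅)
    {v : L} (hv : v ≠ 0) : ∃ z : L, z + τ z = 0 ∧ ω v < ω (v + z) := by
  by_cases htr : v + τ v = 0
  · refine ⟨-v, by rw [map_neg, ← neg_add, htr, neg_zero], ?_⟩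
    rw [add_neg_cancel, ω.map_zero]
    exact lt_top_iff_ne_top.mpr (ω.ne_top_iff.mpr hv)
  · exact exists_trace_zero_lt_of_trace_ne_zero τ ω hτ2 hempty htr

theorem SH_subset_wL0 (hτ2 : ∀ x : L, τ (τ x) = x) (hempty : Lmax τ ω (1 : K) = ∅) :
    SH τ ω ⊆ wL0 τ ω := by
  rintro _ ⟨-, v, -, hv, rfl⟩
  obtain ⟨z, hz, hlt⟩ := exists_trace_zero_lt τ ω hτ2 hempty hv
  have hωz : ω z = ω v := by simpa using ω.map_sub_eq_of_lt_right hlt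
  refine ⟨z, ?_, hz, hωz⟩
  rintro rfl
  exact hlt.ne (by rw [add_zero])

theorem wL0_subset_SH : wL0 τ ω ⊆ SH τ ω := by
  rintro _ ⟨z, hz0, hz, rfl⟩
  exact ⟨0, z, by rw [zero_mul, hz], hz0, rfl⟩

end Improvement

theorem statement16_general {K L Λ' : Type*} [Field K] [Field L] [Algebra K L]
    [AddCommGroup Λ'] [LinearOrder Λ'] [IsOrderedAddMonoid Λ']
    (τ : L ≃ₐ[K] L) (hτ2 : ∀ x : L, τ (τ x) = x)
    (ω : AddValuation L (WithTop Λ'))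
    (hempty : Lmax τ ω (1 : K) = ∅) :
    (∀ u v : L, u * τ u = v + τ v → v ≠ 0 →
      ∃ z : L, z + τ z = 0 ∧ ω v < ω (v + z)) ∧
    SH τ ω = wL0 τ ω :=
  ⟨fun _ _ _ hv => exists_trace_zero_lt τ ω hτ2 hempty hv,
    (SH_subset_wL0 τ ω hτ2 hempty).antisymm (wL0_subset_SH τ ω)⟩

/-- **Statement 16.** Assume `L¹_max = ∅`. Then (a) for every `(u, v) ∈ H` with `v ≠ 0`
there is `z ∈ L⁰` with `ω(v + z) > ω(v)`; and (b) `S = ω(L⁰ ∖ {0})`. -/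
theorem statement16 {K L Λ' : Type*} [Field K] [Field L] [Algebra K L]
    [AddCommGroup Λ'] [LinearOrder Λ'] [IsOrderedAddMonoid Λ']
    (τ : L ≃ₐ[K] L) (hτ2 : ∀ x : L, τ (τ x) = x) (hτne : ∃ x : L, τ x ≠ x)
    (hfix : ∀ x : L, τ x = x ↔ ∃ k : K, algebraMap K L k = x)
    (hrank : Module.finrank K L = 2)
    (ω : AddValuation L (WithTop Λ')) (hωτ : ∀ x : L, ω (τ x) = ω x)
    (hempty : Lmax τ ω (1 : K) = ∅) :
    (∀ u v : L, u * τ u = v + τ v → v ≠ 0 →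
      ∃ z : L, z + τ z = 0 ∧ ω v < ω (v + z)) ∧
    SH τ ω = wL0 τ ω :=
  statement16_general τ hτ2 ω hempty
end

section
/- Assume L¹_max ≠ ∅. Then the subgroup of Λ' generated by the set of differences {s − s' : s, s' ∈ S} equals the subgroup ω(L^×); in particular S is contained in this subgroup. -/
/-- `S` viewed inside `Λ'` (all its values are finite since `v ≠ 0`). -/
def SHval {K L Λ' : Type*} [Field K] [Field L] [Algebra K L] [AddCommGroup Λ'] [LinearOrder Λ'] [IsOrderedAddMonoid Λ']
    (τ : L ≃ₐ[K] L) (ω : AddValuation L (WithTop Λ')) : Set Λ' :=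
  {c : Λ' | ∃ u v : L, u * τ u = v + τ v ∧ v ≠ 0 ∧ ω v = (c : WithTop Λ')}

/-- `ω(L^×)` viewed inside `Λ'`. -/
def wLxval {L Λ' : Type*} [Field L] [AddCommGroup Λ'] [LinearOrder Λ'] [IsOrderedAddMonoid Λ']
    (ω : AddValuation L (WithTop Λ')) : Set Λ' :=
  {c : Λ' | ∃ y : L, y ≠ 0 ∧ ω y = (c : WithTop Λ')}

/-!
Write `Δ` for the subgroup generated by `S - S`. Trace-zero elements `z` give `(0, z) ∈ H`, and
`(u, v) ↦ (z u, N(z) v)` preserves `H`, so `ω(z) ∈ S` and `S + 2ω(z) ⊆ S`; hence `s - ω(z) ∈ Δ`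
for `s ∈ S`, and `ω(K^×) ⊆ Δ`. For `y ∈ L¹_max` we have `ω(y) ∈ S`, and maximality
forces `ω(y) ∈ Δ`, so `S ⊆ Δ`. Every `w ≠ 0` is either of trace zero or a `K^×`-multiple of an
element of trace one, so `ω(L^×) ⊆ Δ`; the reverse inclusion is clear.
-/

section DiffSubgroup

variable {G : Type*} [AddGroup G] (S : Set G)

def diffSubgroup : AddSubgroup G :=
  AddSubgroup.closure {d : G | ∃ s ∈ S, ∃ t ∈ S, d = s - t}

variable {S}

theorem sub_mem_diffSubgroup {s t : G} (hs : s ∈ S) (ht : t ∈ S) : s - t ∈ diffSubgroup S :=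
  AddSubgroup.subset_closure ⟨s, hs, t, ht, rfl⟩

theorem diffSubgroup_le {H : AddSubgroup G} (hS : S ⊆ H) : diffSubgroup S ≤ H :=
  (AddSubgroup.closure_le H).mpr fun _ ⟨_, hs, _, ht, hd⟩ => hd ▸ sub_mem (hS hs) (hS ht)

theorem subset_diffSubgroup {a : G} (ha : a ∈ S) (haS : a ∈ diffSubgroup S) :
    S ⊆ diffSubgroup S := fun s hs => by
  simpa using add_mem (sub_mem_diffSubgroup hs ha) haS

end DiffSubgroup

section ValueGroup

variable {L Λ' : Type*} [Field L] [AddCommGroup Λ'] [LinearOrder Λ'] [IsOrderedAddMonoid Λ']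
  (ω : AddValuation L (WithTop Λ'))

theorem AddValuation.exists_eq_coe {x : L} (hx : x ≠ 0) : ∃ c : Λ', ω x = c :=
  WithTop.ne_top_iff_exists.mp (ω.ne_top_iff.mpr hx) |>.imp fun _ h => h.symm

theorem AddValuation.map_add_eq_or_eq_of_le {b z : L} (h : ω b ≤ ω (b + z)) :
    ω (b + z) = ω b ∨ ω z = ω b := by
  by_cases hbz : ω b = ω z
  · exact .inr hbz.symm
  · left
    rw [ω.map_add_of_distinct_val hbz] at h ⊢
    exact min_eq_left (h.trans (min_le_right _ _))

def valueAddSubgroup : AddSubgroup Λ' where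
  carrier := wLxval ω
  zero_mem' := ⟨1, one_ne_zero, by rw [ω.map_one, WithTop.coe_zero]⟩
  add_mem' := fun ⟨x, hx, hxc⟩ ⟨y, hy, hyc⟩ =>
    ⟨x * y, mul_ne_zero hx hy, by rw [ω.map_mul, hxc, hyc, WithTop.coe_add]⟩
  neg_mem' := fun ⟨x, hx, hxc⟩ => ⟨x⁻¹, inv_ne_zero hx, by rw [ω.map_inv, hxc]; rfl⟩

end ValueGroup

section NormTrace

variable {K L Λ' : Type*} [Field K] [Field L] [Algebra K L] [AddCommGroup Λ'] [LinearOrder Λ']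
  [IsOrderedAddMonoid Λ'] {τ : L ≃ₐ[K] L} {ω : AddValuation L (WithTop Λ')}

theorem SHval_subset_wLxval : SHval τ ω ⊆ wLxval ω :=
  fun _ ⟨_, v, _, hv, hvc⟩ => ⟨v, hv, hvc⟩

theorem mem_SHval_of_trace_eq_zero {z : L} {c : Λ'} (hz : z ≠ 0) (hzT : z + τ z = 0)
    (hc : ω z = c) : c ∈ SHval τ ω :=
  ⟨0, z, by rw [zero_mul, hzT], hz, hc⟩

theorem mem_SHval_of_trace_eq_one {v : L} {c : Λ'} (hv : v ≠ 0) (hvT : v + τ v = 1)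
    (hc : ω v = c) : c ∈ SHval τ ω :=
  ⟨1, v, by rw [map_one, mul_one, hvT], hv, hc⟩

/-- If `τ z = -z`, then `N(z) = -z²` lies in `K`, and `(u, v) ↦ (z u, N(z) v)` preserves `H`. -/
theorem add_add_mem_SHval {z : L} {s d : Λ'} (hs : s ∈ SHval τ ω) (hz : z ≠ 0)
    (hzT : z + τ z = 0) (hd : ω z = d) : d + d + s ∈ SHval τ ω := by
  obtain ⟨u, v, huv, hv, hvs⟩ := hs
  have hτz : τ z = -z := eq_neg_of_add_eq_zero_right hzT
  refine ⟨z * u, -(z * z) * v, ?_, mul_ne_zero (neg_ne_zero.mpr (mul_ne_zero hz hz)) hv, ?_⟩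
  · rw [map_mul, map_mul, map_neg, map_mul, hτz]
    linear_combination (-(z * z)) * huv
  · rw [ω.map_mul, ω.map_neg, ω.map_mul, hd, hvs]
    rfl

theorem sub_mem_diffSubgroup_SHval {z : L} {s d : Λ'} (hs : s ∈ SHval τ ω) (hz : z ≠ 0)
    (hzT : z + τ z = 0) (hd : ω z = d) : s - d ∈ diffSubgroup (SHval τ ω) := by
  have hdS : d ∈ SHval τ ω := mem_SHval_of_trace_eq_zero hz hzT hd
  simpa using sub_mem_diffSubgroup (add_add_mem_SHval hs hz hzT hd)
    (add_add_mem_SHval hdS hz hzT hd)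

theorem mem_diffSubgroup_SHval_of_algebraMap {z₀ : L} (hz₀ : z₀ ≠ 0) (hz₀T : z₀ + τ z₀ = 0)
    {k : K} {c : Λ'} (hk : k ≠ 0) (hc : ω (algebraMap K L k) = c) :
    c ∈ diffSubgroup (SHval τ ω) := by
  obtain ⟨d, hd⟩ := ω.exists_eq_coe hz₀
  have hkz : algebraMap K L k * z₀ + τ (algebraMap K L k * z₀) = 0 := by
    rw [map_mul, τ.commutes, ← mul_add, hz₀T, mul_zero]
  have hkzc : ω (algebraMap K L k * z₀) = ↑(c + d) := by rw [ω.map_mul, hc, hd]; rfl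
  simpa using sub_mem_diffSubgroup
    (mem_SHval_of_trace_eq_zero (mul_ne_zero (by simpa using hk) hz₀) hkz hkzc)
    (mem_SHval_of_trace_eq_zero hz₀ hz₀T hd)

/-- Away from characteristic `2`, maximality of `y` compares `y` with `y - (y - 1/2) = 1/2`:
either `ω y = ω (1/2)` or `ω (y - 1/2) = ω (1/2)`. -/
theorem mem_diffSubgroup_SHval_of_mem_Lmax {z₀ : L} (hz₀ : z₀ ≠ 0) (hz₀T : z₀ + τ z₀ = 0)
    {y : L} (hy : y ∈ Lmax τ ω 1) {a : Λ'} (ha : ω y = a) : a ∈ diffSubgroup (SHval τ ω) := by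
  obtain ⟨hyT, hymax⟩ := hy
  rw [map_one] at hyT
  have hy0 : y ≠ 0 := by rintro rfl; simp at hyT
  have haS : a ∈ SHval τ ω := mem_SHval_of_trace_eq_one hy0 hyT ha
  by_cases h2 : (2 : L) = 0
  · have h1T : (1 : L) + τ 1 = 0 := by rw [map_one, one_add_one_eq_two, h2]
    simpa using sub_mem_diffSubgroup_SHval (d := 0) haS one_ne_zero h1T
      (by rw [ω.map_one, WithTop.coe_zero])
  have hhalf : algebraMap K L 2⁻¹ = 2⁻¹ := by rw [map_inv₀, map_ofNat]
  have hhalf0 : (2⁻¹ : K) ≠ 0 := fun h => inv_ne_zero h2 (by rw [← hhalf, h, map_zero])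
  obtain ⟨κ, hκ⟩ := ω.exists_eq_coe (inv_ne_zero h2)
  have hκΔ : κ ∈ diffSubgroup (SHval τ ω) :=
    mem_diffSubgroup_SHval_of_algebraMap hz₀ hz₀T hhalf0 (by rw [hhalf, hκ])
  set z := y - 2⁻¹ with hz
  have hzT : z + τ z = 0 := by
    rw [hz, map_sub, ← hhalf, τ.commutes, hhalf]
    linear_combination hyT - (mul_inv_cancel₀ h2)
  have hyz : y = 2⁻¹ + z := by ring
  have hle : ω (2⁻¹ : L) ≤ ω y := by
    have h := hymax (-z) (by rw [map_neg, ← neg_add, hzT, neg_zero])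
    rwa [show y + -z = 2⁻¹ by ring] at h
  rcases ω.map_add_eq_or_eq_of_le (hyz ▸ hle) with hyκ | hzκ
  · rw [← hyz, ha, hκ] at hyκ
    exact WithTop.coe_injective hyκ ▸ hκΔ
  · have hz0 : z ≠ 0 := by rintro h; rw [h, hκ] at hzκ; simp at hzκ
    simpa using add_mem (sub_mem_diffSubgroup_SHval haS hz0 hzT (hzκ.trans hκ)) hκΔ

theorem wLxval_subset_diffSubgroup_SHval (hτ2 : ∀ x : L, τ (τ x) = x)
    (hfix : ∀ x : L, τ x = x ↔ ∃ k : K, algebraMap K L k = x)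
    {z₀ : L} (hz₀ : z₀ ≠ 0) (hz₀T : z₀ + τ z₀ = 0)
    (hSΔ : SHval τ ω ⊆ diffSubgroup (SHval τ ω)) : wLxval ω ⊆ diffSubgroup (SHval τ ω) := by
  rintro c ⟨w, hw, hwc⟩
  obtain ⟨k, hk⟩ := (hfix (w + τ w)).mp (by rw [map_add, hτ2, add_comm])
  by_cases hk0 : k = 0
  · exact hSΔ (mem_SHval_of_trace_eq_zero hw (by rw [← hk, hk0, map_zero]) hwc)
  have hk' : algebraMap K L k ≠ 0 := by simpa using hk0
  set v := w * (algebraMap K L k)⁻¹ with hv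
  have hvT : v + τ v = 1 := by
    rw [hv, map_mul, map_inv₀, τ.commutes, ← add_mul, hk, mul_inv_cancel₀ (hk ▸ hk')]
  obtain ⟨s, hs⟩ := ω.exists_eq_coe (mul_ne_zero hw (inv_ne_zero hk'))
  obtain ⟨κ, hκ⟩ := ω.exists_eq_coe hk'
  have hwv : w = algebraMap K L k * v := by rw [hv]; field_simp
  have hc : c = κ + s := WithTop.coe_injective (by rw [← hwc, hwv, ω.map_mul, hκ, hs]; rfl)
  exact hc ▸ add_mem (mem_diffSubgroup_SHval_of_algebraMap hz₀ hz₀T hk0 hκ)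
    (hSΔ (mem_SHval_of_trace_eq_one (mul_ne_zero hw (inv_ne_zero hk')) hvT hs))

theorem exists_ne_zero_trace_eq_zero (hτ2 : ∀ x : L, τ (τ x) = x) (hτne : ∃ x : L, τ x ≠ x) :
    ∃ z : L, z ≠ 0 ∧ z + τ z = 0 := by
  obtain ⟨x, hx⟩ := hτne
  exact ⟨x - τ x, sub_ne_zero.mpr (Ne.symm hx), by rw [map_sub, hτ2]; abel⟩

end NormTrace

theorem statement18_general {K L Λ' : Type*} [Field K] [Field L] [Algebra K L]
    [AddCommGroup Λ'] [LinearOrder Λ'] [IsOrderedAddMonoid Λ']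
    (τ : L ≃ₐ[K] L) (hτ2 : ∀ x : L, τ (τ x) = x) (hτne : ∃ x : L, τ x ≠ x)
    (hfix : ∀ x : L, τ x = x ↔ ∃ k : K, algebraMap K L k = x)
    (ω : AddValuation L (WithTop Λ'))
    (hne : (Lmax τ ω (1 : K)).Nonempty) :
    (AddSubgroup.closure {d : Λ' | ∃ s ∈ SHval τ ω, ∃ t ∈ SHval τ ω, d = s - t} : Set Λ') =
      wLxval ω ∧
    SHval τ ω ⊆
      (AddSubgroup.closure {d : Λ' | ∃ s ∈ SHval τ ω, ∃ t ∈ SHval τ ω, d = s - t} : Set Λ') := by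
  obtain ⟨z₀, hz₀, hz₀T⟩ := exists_ne_zero_trace_eq_zero hτ2 hτne
  obtain ⟨y, hy⟩ := hne
  have hy0 : y ≠ 0 := by rintro rfl; simpa using hy.1
  obtain ⟨a, ha⟩ := ω.exists_eq_coe hy0
  have hSΔ : SHval τ ω ⊆ diffSubgroup (SHval τ ω) :=
    subset_diffSubgroup (mem_SHval_of_trace_eq_one hy0 (by simpa using hy.1) ha)
      (mem_diffSubgroup_SHval_of_mem_Lmax hz₀ hz₀T hy ha)
  refine ⟨subset_antisymm ?_ (wLxval_subset_diffSubgroup_SHval hτ2 hfix hz₀ hz₀T hSΔ), hSΔ⟩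
  exact diffSubgroup_le (H := valueAddSubgroup ω) SHval_subset_wLxval

/-- **Statement 18.** If `L¹_max ≠ ∅`, the subgroup of `Λ'` generated by the differences
`{s − s' : s, s' ∈ S}` is exactly the subgroup `ω(L^×)`; in particular `S` is contained
in this subgroup. -/
theorem statement18 {K L Λ' : Type*} [Field K] [Field L] [Algebra K L]
    [AddCommGroup Λ'] [LinearOrder Λ'] [IsOrderedAddMonoid Λ']
    (τ : L ≃ₐ[K] L) (hτ2 : ∀ x : L, τ (τ x) = x) (hτne : ∃ x : L, τ x ≠ x)
    (hfix : ∀ x : L, τ x = x ↔ ∃ k : K, algebraMap K L k = x)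
    (hrank : Module.finrank K L = 2)
    (ω : AddValuation L (WithTop Λ')) (hωτ : ∀ x : L, ω (τ x) = ω x)
    (hne : (Lmax τ ω (1 : K)).Nonempty) :
    (AddSubgroup.closure {d : Λ' | ∃ s ∈ SHval τ ω, ∃ t ∈ SHval τ ω, d = s - t} : Set Λ') =
      wLxval ω ∧
    SHval τ ω ⊆
      (AddSubgroup.closure {d : Λ' | ∃ s ∈ SHval τ ω, ∃ t ∈ SHval τ ω, d = s - t} : Set Λ') :=
  statement18_general τ hτ2 hτne hfix ω hne
end
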